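/- arXiv:1710.02027 — 9 statements merged into one kernel-verified Lean document; each statement's English description precedes it below -/
import Mathlib

section
/- Fix 0 < ε < 1, let λ be a finite Borel measure on ℝ, and let f : ℝ → ℝ be continuous. Let (Ω, ℙ) be a probability space and for each n let M⁽ⁿ⁾ : Ω → (Borel measures on ℝ) be a random measure such that for all a, b with ε ≤ a ≤ b ≤ 1/ε the map ω ↦ M⁽ⁿ⁾(ω)([a,b]) is a real-valued random variable and M⁽ⁿ⁾([a,b]) → λ([a,b]) in probability as n → ∞; assume also that ω ↦ ∫_{[ε,1/ε]} f dM⁽ⁿ⁾(ω) is a random variable. Then ∫_{[ε,1/ε]} f dM⁽ⁿ⁾ → ∫_{[ε,1/ε]} f dλ in probability as n → ∞. -/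
open MeasureTheory Filter Topology

section Helpers

variable {Ω : Type*} [MeasurableSpace Ω] {P : Measure Ω}

private lemma tim_const (c : ℝ) :
    TendstoInMeasure P (fun (_ : ℕ) (_ : Ω) => c) atTop (fun _ => c) := by
  rw [tendstoInMeasure_iff_dist]
  intro δ hδ
  have h : {ω : Ω | δ ≤ dist c c} = ∅ := by
    ext ω; simp [dist_self, hδ.not_ge]
  show Tendsto (fun _ : ℕ => P {ω : Ω | δ ≤ dist c c}) atTop (𝓝 0)
  rw [h]
  simpa using (tendsto_const_nhds : Tendsto (fun _ : ℕ => (0 : ENNReal)) atTop (𝓝 0))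

private lemma tim_add_const {X Y : ℕ → Ω → ℝ} {a b : ℝ}
    (hX : TendstoInMeasure P X atTop (fun _ => a))
    (hY : TendstoInMeasure P Y atTop (fun _ => b)) :
    TendstoInMeasure P (fun n ω => X n ω + Y n ω) atTop (fun _ => a + b) := by
  rw [tendstoInMeasure_iff_dist] at hX hY ⊢
  intro δ hδ
  have h1 := hX (δ / 2) (by positivity)
  have h2 := hY (δ / 2) (by positivity)
  have hb : ∀ n, P {ω | δ ≤ dist (X n ω + Y n ω) (a + b)} ≤
      P {ω | δ / 2 ≤ dist (X n ω) a} + P {ω | δ / 2 ≤ dist (Y n ω) b} := by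
    intro n
    refine le_trans (measure_mono ?_) (measure_union_le _ _)
    intro ω hω
    simp only [Set.mem_setOf_eq, Set.mem_union] at hω ⊢
    by_contra hc
    push_neg at hc
    have hd := dist_add_add_le (X n ω) (Y n ω) a b
    have := hc.1
    have := hc.2
    linarith
  have h0 : Tendsto (fun n => P {ω | δ / 2 ≤ dist (X n ω) a} +
      P {ω | δ / 2 ≤ dist (Y n ω) b}) atTop (𝓝 0) := by
    simpa using h1.add h2
  exact tendsto_of_tendsto_of_tendsto_of_le_of_le tendsto_const_nhds h0
    (fun n => zero_le) hb

private lemma tim_neg_const {X : ℕ → Ω → ℝ} {a : ℝ}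
    (hX : TendstoInMeasure P X atTop (fun _ => a)) :
    TendstoInMeasure P (fun n ω => -(X n ω)) atTop (fun _ => -a) := by
  rw [tendstoInMeasure_iff_dist] at hX ⊢
  intro δ hδ
  have h := hX δ hδ
  have : ∀ n, {ω | δ ≤ dist (-(X n ω)) (-a)} = {ω | δ ≤ dist (X n ω) a} := by
    intro n; ext ω; simp [dist_neg_neg]
  simpa [this] using h

private lemma tim_sub_const {X Y : ℕ → Ω → ℝ} {a b : ℝ}
    (hX : TendstoInMeasure P X atTop (fun _ => a))
    (hY : TendstoInMeasure P Y atTop (fun _ => b)) :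
    TendstoInMeasure P (fun n ω => X n ω - Y n ω) atTop (fun _ => a - b) := by
  have := tim_add_const hX (tim_neg_const hY)
  simpa [sub_eq_add_neg] using this

private lemma tim_const_mul {X : ℕ → Ω → ℝ} {a : ℝ} (c : ℝ)
    (hX : TendstoInMeasure P X atTop (fun _ => a)) :
    TendstoInMeasure P (fun n ω => c * X n ω) atTop (fun _ => c * a) := by
  rcases eq_or_ne c 0 with rfl | hc
  · simpa using tim_const (P := P) 0
  · rw [tendstoInMeasure_iff_dist] at hX ⊢
    intro δ hδ
    have hcpos : 0 < |c| := abs_pos.mpr hc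
    have h := hX (δ / |c|) (by positivity)
    have hset : ∀ n, {ω | δ ≤ dist (c * X n ω) (c * a)} =
        {ω | δ / |c| ≤ dist (X n ω) a} := by
      intro n; ext ω
      simp only [Set.mem_setOf_eq, Real.dist_eq, ← mul_sub, abs_mul]
      rw [div_le_iff₀' hcpos]
    simpa [hset] using h

private lemma tim_sum {ι : Type*} (s : Finset ι) (X : ι → ℕ → Ω → ℝ) (a : ι → ℝ)
    (h : ∀ i ∈ s, TendstoInMeasure P (X i) atTop (fun _ => a i)) :
    TendstoInMeasure P (fun n ω => ∑ i ∈ s, X i n ω) atTop (fun _ => ∑ i ∈ s, a i) := by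
  classical
  induction s using Finset.induction_on with
  | empty => simpa using tim_const (P := P) 0
  | @insert i s hni ih =>
    have h1 := h i (Finset.mem_insert_self i s)
    have h2 := ih fun j hj => h j (Finset.mem_insert_of_mem hj)
    have := tim_add_const h1 h2
    simpa [Finset.sum_insert hni] using this

/-- Deterministic step-function approximation of the integral on `[ε, 1/ε]`. -/
private lemma approx_aux (ε θ : ℝ) (hε : 0 < ε) (hε1 : ε < 1) (f : ℝ → ℝ)
    (hf : Continuous f) (hθ : 0 < θ) :
    ∃ (k : ℕ) (t : ℕ → ℝ),
      (∀ i ≤ k, t i ∈ Set.Icc ε (1 / ε)) ∧ (∀ i j, i ≤ j → t i ≤ t j) ∧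
      ∀ μ : Measure ℝ, μ (Set.Icc ε (1 / ε)) ≠ ⊤ →
        |(∫ x in Set.Icc ε (1 / ε), f x ∂μ) -
          (f (t 0) * (μ (Set.Icc ε ε)).toReal +
            ∑ j ∈ Finset.range k, f (t (j + 1)) * (μ (Set.Ioc (t j) (t (j + 1)))).toReal)|
          ≤ θ * (μ (Set.Icc ε (1 / ε))).toReal := by
  have hεinv : ε < 1 / ε := by
    rw [lt_div_iff₀ hε]; nlinarith
  have hεle : ε ≤ 1 / ε := hεinv.le
  have hK : IsCompact (Set.Icc ε (1 / ε)) := isCompact_Icc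
  obtain ⟨d, hd, hdcont⟩ : ∃ d > 0, ∀ x ∈ Set.Icc ε (1 / ε), ∀ y ∈ Set.Icc ε (1 / ε),
      dist x y < d → dist (f x) (f y) < θ := by
    have h := hK.uniformContinuousOn_of_continuous hf.continuousOn
    rw [Metric.uniformContinuousOn_iff] at h
    exact h θ hθ
  obtain ⟨L, hLdef⟩ : ∃ L : ℝ, L = 1 / ε - ε := ⟨_, rfl⟩
  have hL : 0 < L := by rw [hLdef]; linarith
  obtain ⟨k, hkdef⟩ : ∃ k : ℕ, k = ⌈L / d⌉₊ + 1 := ⟨_, rfl⟩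
  have hkpos : 0 < (k : ℝ) := by rw [hkdef]; positivity
  have hmesh : L / k < d := by
    have h1 : L / d < (k : ℝ) := by
      have h2 := Nat.le_ceil (L / d)
      have h3 : (⌈L / d⌉₊ : ℝ) < k := by rw [hkdef]; push_cast; linarith
      linarith
    rw [div_lt_iff₀ hd] at h1
    rw [div_lt_iff₀ hkpos]
    nlinarith
  have hLk : 0 < L / k := div_pos hL hkpos
  obtain ⟨t, ht⟩ : ∃ t : ℕ → ℝ, ∀ i : ℕ, t i = ε + i * (L / k) := ⟨_, fun _ => rfl⟩
  have hmono : ∀ i j : ℕ, i ≤ j → t i ≤ t j := by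
    intro i j hij
    rw [ht, ht]
    have : (i : ℝ) ≤ j := Nat.cast_le.2 hij
    nlinarith
  have ht0 : t 0 = ε := by rw [ht]; simp
  have htk : t k = 1 / ε := by
    have hmul : (k : ℝ) * (L / k) = L := by field_simp
    rw [ht, hmul, hLdef]; ring
  have htmem : ∀ i ≤ k, t i ∈ Set.Icc ε (1 / ε) := by
    intro i hi
    constructor
    · rw [← ht0]; exact hmono 0 i (Nat.zero_le i)
    · rw [← htk]; exact hmono i k hi
  have hstep : ∀ j : ℕ, t (j + 1) - t j = L / k := by
    intro j; rw [ht, ht]; push_cast; ring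
  refine ⟨k, t, htmem, hmono, ?_⟩
  obtain ⟨A, hA0, hAs⟩ : ∃ A : ℕ → Set ℝ, A 0 = Set.Icc ε ε ∧
      ∀ j, A (j + 1) = Set.Ioc (t j) (t (j + 1)) :=
    ⟨fun i => Nat.casesOn i (Set.Icc ε ε) fun j => Set.Ioc (t j) (t (j + 1)),
      rfl, fun _ => rfl⟩
  have hAmeas : ∀ i, MeasurableSet (A i) := by
    intro i
    cases i with
    | zero => rw [hA0]; exact measurableSet_Icc
    | succ j => rw [hAs]; exact measurableSet_Ioc
  have hAsub : ∀ i ∈ Finset.range (k + 1), A i ⊆ Set.Icc ε (1 / ε) := by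
    intro i hi
    rw [Finset.mem_range, Nat.lt_succ_iff] at hi
    cases i with
    | zero => rw [hA0]; exact Set.Icc_subset_Icc le_rfl hεle
    | succ j =>
      rw [hAs]
      refine Set.Subset.trans Set.Ioc_subset_Icc_self (Set.Icc_subset_Icc ?_ ?_)
      · exact (htmem j (Nat.le_of_succ_le hi)).1
      · exact (htmem (j + 1) hi).2
  have hd2 : ∀ i j : ℕ, i < j → Disjoint (A i) (A j) := by
    intro i j hij
    match i, j, hij with
    | 0, (j' + 1), _ =>
      rw [hA0, hAs, Set.Icc_self, Set.disjoint_singleton_left]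
      intro hmem
      have hεtj : ε ≤ t j' := by rw [← ht0]; exact hmono 0 j' (Nat.zero_le j')
      exact absurd hmem.1 (not_lt.2 hεtj)
    | (i' + 1), (j' + 1), hij =>
      rw [hAs, hAs, Set.Ioc_disjoint_Ioc]
      have hij' : i' + 1 ≤ j' := Nat.lt_succ_iff.mp hij
      calc min (t (i' + 1)) (t (j' + 1)) ≤ t (i' + 1) := min_le_left _ _
        _ ≤ t j' := hmono _ _ hij'
        _ ≤ max (t i') (t j') := le_max_right _ _
  have hdisj : (↑(Finset.range (k + 1)) : Set ℕ).Pairwise (Function.onFun Disjoint A) := by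
    intro i _ j _ hij
    rcases hij.lt_or_gt with h | h
    · exact hd2 i j h
    · exact (hd2 j i h).symm
  have hcover : Set.Icc ε (1 / ε) = ⋃ i ∈ Finset.range (k + 1), A i := by
    apply Set.Subset.antisymm
    · intro x hx
      rcases eq_or_lt_of_le hx.1 with heq | hlt
      · refine Set.mem_biUnion (Finset.mem_range.2 (Nat.succ_pos k)) ?_
        rw [hA0]; exact ⟨hx.1, heq.ge⟩
      · obtain ⟨r, hr⟩ : ∃ r : ℝ, r = (x - ε) / (L / k) := ⟨_, rfl⟩
        have hrpos : 0 < r := by rw [hr]; exact div_pos (by linarith) hLk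
        obtain ⟨m, hm⟩ : ∃ m : ℕ, m = ⌈r⌉₊ := ⟨_, rfl⟩
        have hm1 : 0 < m := by rw [hm]; exact Nat.ceil_pos.2 hrpos
        have hmk : m ≤ k := by
          rw [hm, Nat.ceil_le, hr, div_le_iff₀ hLk]
          have hxL : x - ε ≤ L := by rw [hLdef]; linarith [hx.2]
          calc x - ε ≤ L := hxL
            _ = (k : ℝ) * (L / k) := by field_simp
        obtain ⟨j, hj⟩ : ∃ j, m = j + 1 := ⟨m - 1, (Nat.succ_pred_eq_of_pos hm1).symm⟩
        refine Set.mem_biUnion (Finset.mem_range.2 (Nat.lt_succ_iff.2 (hj ▸ hmk)))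
          (show x ∈ A (j + 1) from ?_)
        rw [hAs]
        have hjr : (j : ℝ) < r := Nat.lt_ceil.1 (by rw [← hm, hj]; exact Nat.lt_succ_self j)
        have hrm : r ≤ (m : ℝ) := by rw [hm]; exact Nat.le_ceil r
        have hxeq : r * (L / k) = x - ε := by rw [hr]; exact div_mul_cancel₀ _ hLk.ne'
        have hmj : (m : ℝ) = (j : ℝ) + 1 := by rw [hj]; push_cast; ring
        constructor
        · have h5 : (j : ℝ) * (L / k) < r * (L / k) := mul_lt_mul_of_pos_right hjr hLk
          rw [ht]; linarith
        · have h5 : r * (L / k) ≤ (m : ℝ) * (L / k) := mul_le_mul_of_nonneg_right hrm hLk.le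
          have h6 : (m : ℝ) * (L / k) = ((j : ℝ) + 1) * (L / k) := by rw [hmj]
          rw [ht]; push_cast; linarith
    · exact Set.iUnion₂_subset hAsub
  intro μ hμ
  obtain ⟨B, hB⟩ := hK.exists_bound_of_continuousOn hf.continuousOn
  have hIntK : IntegrableOn f (Set.Icc ε (1 / ε)) μ := by
    refine Measure.integrableOn_of_bounded (M := B) hμ hf.aestronglyMeasurable ?_
    exact (ae_restrict_iff' measurableSet_Icc).2 (ae_of_all _ hB)
  have hsplit : (∫ x in Set.Icc ε (1 / ε), f x ∂μ) =
      ∑ i ∈ Finset.range (k + 1), ∫ x in A i, f x ∂μ := by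
    rw [hcover]
    exact integral_biUnion_finset _ (fun i _ => hAmeas i) hdisj
      (fun i hi => hIntK.mono_set (hAsub i hi))
  have hterm : ∀ i ∈ Finset.range (k + 1),
      |(∫ x in A i, f x ∂μ) - f (t i) * (μ (A i)).toReal| ≤ θ * (μ (A i)).toReal := by
    intro i hi
    have hAK := hAsub i hi
    have hAfin : μ (A i) < ⊤ := (measure_mono hAK).trans_lt (lt_top_iff_ne_top.2 hμ)
    have hclose : ∀ x ∈ A i, |f x - f (t i)| ≤ θ := by
      intro x hx
      have hxK : x ∈ Set.Icc ε (1 / ε) := hAK hx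
      have htiK : t i ∈ Set.Icc ε (1 / ε) :=
        htmem i (Nat.lt_succ_iff.1 (Finset.mem_range.1 hi))
      have hdist : dist x (t i) < d := by
        cases i with
        | zero =>
          rw [hA0] at hx
          have hxε : x = ε := le_antisymm hx.2 hx.1
          rw [hxε, ht0, dist_self]; exact hd
        | succ j =>
          rw [hAs] at hx
          have hx1 : t j < x := hx.1
          have hx2 : x ≤ t (j + 1) := hx.2
          rw [Real.dist_eq, abs_sub_comm, abs_of_nonneg (by linarith)]
          have h7 := hstep j
          linarith
      have h8 := hdcont x hxK (t i) htiK hdist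
      rw [Real.dist_eq] at h8
      exact h8.le
    have heq2 : (∫ x in A i, f x ∂μ) - f (t i) * (μ (A i)).toReal =
        ∫ x in A i, (f x - f (t i)) ∂μ := by
      rw [integral_sub (hIntK.mono_set hAK)
        (integrableOn_const hAfin.ne), setIntegral_const, smul_eq_mul, mul_comm, measureReal_def]
    rw [heq2]
    have hn := norm_setIntegral_le_of_norm_le_const (C := θ) (f := fun x => f x - f (t i)) hAfin
      (fun x hx => by simpa [Real.norm_eq_abs] using hclose x hx)
    simpa [Real.norm_eq_abs, measureReal_def] using hn
  have hsum : (μ (Set.Icc ε (1 / ε))).toReal =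
      ∑ i ∈ Finset.range (k + 1), (μ (A i)).toReal := by
    rw [hcover, measure_biUnion_finset hdisj (fun i _ => hAmeas i)]
    exact ENNReal.toReal_sum fun i hi =>
      ((measure_mono (hAsub i hi)).trans_lt (lt_top_iff_ne_top.2 hμ)).ne
  have hrearr : f (t 0) * (μ (Set.Icc ε ε)).toReal +
      ∑ j ∈ Finset.range k, f (t (j + 1)) * (μ (Set.Ioc (t j) (t (j + 1)))).toReal =
      ∑ i ∈ Finset.range (k + 1), f (t i) * (μ (A i)).toReal := by
    rw [Finset.sum_range_succ' (fun i => f (t i) * (μ (A i)).toReal) k]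
    simp only [hA0, hAs]
    ring
  calc |(∫ x in Set.Icc ε (1 / ε), f x ∂μ) -
        (f (t 0) * (μ (Set.Icc ε ε)).toReal +
          ∑ j ∈ Finset.range k, f (t (j + 1)) * (μ (Set.Ioc (t j) (t (j + 1)))).toReal)|
      = |∑ i ∈ Finset.range (k + 1),
          ((∫ x in A i, f x ∂μ) - f (t i) * (μ (A i)).toReal)| := by
        rw [hsplit, hrearr, ← Finset.sum_sub_distrib]
    _ ≤ ∑ i ∈ Finset.range (k + 1),
          |(∫ x in A i, f x ∂μ) - f (t i) * (μ (A i)).toReal| :=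
        Finset.abs_sum_le_sum_abs _ _
    _ ≤ ∑ i ∈ Finset.range (k + 1), θ * (μ (A i)).toReal :=
        Finset.sum_le_sum hterm
    _ = θ * (μ (Set.Icc ε (1 / ε))).toReal := by
        rw [hsum, Finset.mul_sum]

end Helpers

/-- Paper's Lemma 4.5: one-dimensional random-measure convergence lemma on the
interval `[ε, 1/ε]`. -/
theorem stmt_4 {Ω : Type*} [MeasurableSpace Ω] (P : Measure Ω) [IsProbabilityMeasure P]
    (ε : ℝ) (hε : 0 < ε) (hε1 : ε < 1)
    (lam : Measure ℝ) [IsFiniteMeasure lam]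
    (f : ℝ → ℝ) (hf : Continuous f)
    (M : ℕ → Ω → Measure ℝ)
    (hfin : ∀ n ω a b, ε ≤ a → a ≤ b → b ≤ 1 / ε → M n ω (Set.Icc a b) ≠ ⊤)
    (hmeas : ∀ (n : ℕ) (a b : ℝ), ε ≤ a → a ≤ b → b ≤ 1 / ε →
      Measurable fun ω => (M n ω (Set.Icc a b)).toReal)
    (hconv : ∀ a b : ℝ, ε ≤ a → a ≤ b → b ≤ 1 / ε →
      TendstoInMeasure P (fun n ω => (M n ω (Set.Icc a b)).toReal) Filter.atTop
        (fun _ => (lam (Set.Icc a b)).toReal))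
    (hintmeas : ∀ n, Measurable fun ω => ∫ x in Set.Icc ε (1 / ε), f x ∂(M n ω)) :
    TendstoInMeasure P (fun n ω => ∫ x in Set.Icc ε (1 / ε), f x ∂(M n ω))
      Filter.atTop (fun _ => ∫ x in Set.Icc ε (1 / ε), f x ∂lam) := by
  have hεinv : ε < 1 / ε := by rw [lt_div_iff₀ hε]; nlinarith
  have hεle : ε ≤ 1 / ε := hεinv.le
  rw [tendstoInMeasure_iff_dist]
  intro δ hδ
  set I : ℝ := ∫ x in Set.Icc ε (1 / ε), f x ∂lam with hI
  set C : ℝ := (lam (Set.Icc ε (1 / ε))).toReal with hCdef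
  have hC0 : 0 ≤ C := ENNReal.toReal_nonneg
  set θ : ℝ := δ / (4 * (C + 1)) with hθdef
  have hθ : 0 < θ := by positivity
  obtain ⟨k, t, htmem, hmono, key⟩ := approx_aux ε θ hε hε1 f hf hθ
  set S : Measure ℝ → ℝ := fun μ =>
    f (t 0) * (μ (Set.Icc ε ε)).toReal +
      ∑ j ∈ Finset.range k, f (t (j + 1)) * (μ (Set.Ioc (t j) (t (j + 1)))).toReal with hSdef
  -- convergence in probability of S (M n ·) to S lam
  have hIoc : ∀ j ∈ Finset.range k,
      TendstoInMeasure P (fun n ω => (M n ω (Set.Ioc (t j) (t (j + 1)))).toReal) atTop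
        (fun _ => (lam (Set.Ioc (t j) (t (j + 1)))).toReal) := by
    intro j hj
    rw [Finset.mem_range] at hj
    have hja : ε ≤ t j := (htmem j (Nat.le_of_lt hj)).1
    have hjb : t j ≤ t (j + 1) := hmono j (j + 1) (Nat.le_succ j)
    have hjc : t (j + 1) ≤ 1 / ε := (htmem (j + 1) hj).2
    have hεj : ε ≤ t (j + 1) := hja.trans hjb
    have hab : ∀ μ : Measure ℝ, μ (Set.Icc ε (t (j + 1))) ≠ ⊤ →
        (μ (Set.Ioc (t j) (t (j + 1)))).toReal =
          (μ (Set.Icc ε (t (j + 1)))).toReal - (μ (Set.Icc ε (t j))).toReal := by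
      intro μ hμ
      have hu : Set.Icc ε (t j) ∪ Set.Ioc (t j) (t (j + 1)) = Set.Icc ε (t (j + 1)) :=
        Set.Icc_union_Ioc_eq_Icc hja hjb
      have hdisj : Disjoint (Set.Icc ε (t j)) (Set.Ioc (t j) (t (j + 1))) := by
        rw [Set.disjoint_left]
        intro x hx1 hx2
        exact absurd hx2.1 (not_lt.2 hx1.2)
      have h1 : μ (Set.Icc ε (t j)) ≠ ⊤ :=
        ((measure_mono (Set.Icc_subset_Icc le_rfl hjb)).trans_lt
          (lt_top_iff_ne_top.2 hμ)).ne
      have h2 : μ (Set.Ioc (t j) (t (j + 1))) ≠ ⊤ :=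
        ((measure_mono (Set.Ioc_subset_Icc_self.trans
          (Set.Icc_subset_Icc hja le_rfl))).trans_lt (lt_top_iff_ne_top.2 hμ)).ne
      have := measure_union (μ := μ) hdisj measurableSet_Ioc
      rw [hu] at this
      rw [this, ENNReal.toReal_add h1 h2]
      ring
    have hdiff := tim_sub_const (hconv ε (t (j + 1)) le_rfl hεj hjc)
      (hconv ε (t j) le_rfl hja (hjb.trans hjc))
    refine TendstoInMeasure.congr (fun n => ae_of_all _ fun ω => ?_)
      (ae_of_all _ fun ω => ?_) hdiff
    · exact (hab (M n ω) (hfin n ω ε (t (j + 1)) le_rfl hεj hjc)).symm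
    · exact (hab lam (measure_ne_top _ _)).symm
  have hconvS : TendstoInMeasure P (fun n ω => S (M n ω)) atTop (fun _ => S lam) := by
    have h0 := tim_const_mul (P := P) (f (t 0)) (hconv ε ε le_rfl le_rfl hεle)
    have hsum := tim_sum (P := P) (Finset.range k)
      (fun j n ω => f (t (j + 1)) * (M n ω (Set.Ioc (t j) (t (j + 1)))).toReal)
      (fun j => f (t (j + 1)) * (lam (Set.Ioc (t j) (t (j + 1)))).toReal)
      (fun j hj => tim_const_mul (f (t (j + 1))) (hIoc j hj))
    exact tim_add_const h0 hsum
  have hconvK := hconv ε (1 / ε) le_rfl hεle le_rfl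
  have hB : ∀ n, P {ω | δ ≤ dist (∫ x in Set.Icc ε (1 / ε), f x ∂(M n ω)) I} ≤
      P {ω | δ / 2 ≤ dist (S (M n ω)) (S lam)} +
        P {ω | 1 ≤ dist ((M n ω (Set.Icc ε (1 / ε))).toReal) C} := by
    intro n
    refine le_trans (measure_mono ?_) (measure_union_le _ _)
    intro ω hω
    simp only [Set.mem_setOf_eq, Set.mem_union] at hω ⊢
    by_contra hcon
    push_neg at hcon
    obtain ⟨h1, h2⟩ := hcon
    rw [Real.dist_eq] at hω h1 h2
    have hk1 := key (M n ω) (hfin n ω ε (1 / ε) le_rfl hεle le_rfl)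
    have hk2 := key lam (measure_ne_top _ _)
    have hMle : (M n ω (Set.Icc ε (1 / ε))).toReal ≤ C + 1 := by
      have := le_abs_self ((M n ω (Set.Icc ε (1 / ε))).toReal - C)
      linarith
    have hθM : θ * (M n ω (Set.Icc ε (1 / ε))).toReal ≤ θ * (C + 1) :=
      mul_le_mul_of_nonneg_left hMle hθ.le
    have hθC : θ * C ≤ θ * (C + 1) := by nlinarith
    have h4 : θ * (C + 1) = δ / 4 := by
      rw [hθdef]; field_simp
    have habs1 := abs_sub_le (∫ x in Set.Icc ε (1 / ε), f x ∂(M n ω)) (S (M n ω)) I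
    have habs2 := abs_sub_le (S (M n ω)) (S lam) I
    have hk2' : |I - S lam| ≤ θ * C := hk2
    have h9 : |S lam - I| ≤ θ * C := by rwa [abs_sub_comm] at hk2'
    linarith
  have h0 : Tendsto (fun n => P {ω | δ / 2 ≤ dist (S (M n ω)) (S lam)} +
      P {ω | 1 ≤ dist ((M n ω (Set.Icc ε (1 / ε))).toReal) C}) atTop (𝓝 0) := by
    have h1 := (tendstoInMeasure_iff_dist.1 hconvS (δ / 2) (by positivity)).add
      (tendstoInMeasure_iff_dist.1 hconvK 1 one_pos)
    simp only [add_zero] at h1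
    exact h1
  exact tendsto_of_tendsto_of_tendsto_of_le_of_le tendsto_const_nhds h0
    (fun n => zero_le) hB
end

section
/- Let τ be a real number with 2 < τ < 3 and let B > 0 and μ > 0. Then the function (t₁, t₂) ↦ (t₁ t₂)^{−τ} (1 − e^{−B t₁}) (1 − e^{−B t₂}) (1 − e^{−μ t₁ t₂}) is Lebesgue integrable on (0,∞) × (0,∞). -/
/-! Since `1 - exp (-z) ≤ z ^ s` for `0 < s ≤ 1`, the integrand is at most
`μ ^ s g(t₁) g(t₂)` with `g(t) = t ^ (s - τ) (1 - exp (-B t))`. For `s = (τ - 1) / 2` the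
exponent `r = s - τ` lies in `(-2, -1)`, so `g` is integrable on `(0, ∞)`: near `0`,
`g(t) ≤ B t ^ (r + 1)` with `r + 1 > -1`, and near `∞`, `g(t) ≤ t ^ r` with `r < -1`. -/

open MeasureTheory Set Real

lemma one_sub_exp_neg_nonneg {x : ℝ} (hx : 0 ≤ x) : 0 ≤ 1 - exp (-x) := by
  linarith [exp_le_one_iff.2 (neg_nonpos.2 hx)]

lemma one_sub_exp_neg_le_one (x : ℝ) : 1 - exp (-x) ≤ 1 := by
  linarith [exp_pos (-x)]

lemma one_sub_exp_neg_le_rpow {s x : ℝ} (hs0 : 0 < s) (hs1 : s ≤ 1) (hx : 0 ≤ x) :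
    1 - exp (-x) ≤ x ^ s := by
  rcases le_total x 1 with hx1 | hx1
  · calc 1 - exp (-x) ≤ x := by linarith [one_sub_le_exp_neg x]
      _ = x ^ (1 : ℝ) := (rpow_one x).symm
      _ ≤ x ^ s := rpow_le_rpow_of_exponent_ge' hx hx1 hs0.le hs1
  · exact (one_sub_exp_neg_le_one x).trans (one_le_rpow hx1 hs0.le)

theorem MeasureTheory.IntegrableOn.mul_prod {α β L : Type*} [MeasurableSpace α]
    [MeasurableSpace β] [NormedRing L] {μ : Measure α} {ν : Measure β} [SFinite μ] [SFinite ν]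
    {f : α → L} {g : β → L} {s : Set α} {t : Set β} (hf : IntegrableOn f s μ)
    (hg : IntegrableOn g t ν) :
    IntegrableOn (fun z : α × β => f z.1 * g z.2) (s ×ˢ t) (μ.prod ν) := by
  rw [IntegrableOn, ← Measure.prod_restrict]
  exact Integrable.mul_prod hf hg

lemma integrableOn_Ioi_rpow_mul_one_sub_exp_neg {r B : ℝ} (hr1 : r < -1) (hr2 : -2 < r)
    (hB : 0 ≤ B) : IntegrableOn (fun t : ℝ => t ^ r * (1 - exp (-(B * t)))) (Ioi 0) := by
  have hmeas : AEStronglyMeasurable (fun t : ℝ => t ^ r * (1 - exp (-(B * t)))) :=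
    (by fun_prop : Measurable _).aestronglyMeasurable
  have hnorm : ∀ t : ℝ, 0 < t →
      ‖t ^ r * (1 - exp (-(B * t)))‖ = t ^ r * (1 - exp (-(B * t))) :=
    fun t ht => norm_of_nonneg <|
      mul_nonneg (rpow_nonneg ht.le r) (one_sub_exp_neg_nonneg (by positivity))
  rw [← Ioc_union_Ioi_eq_Ioi zero_le_one]
  refine IntegrableOn.union ?_ ?_
  · have hdom : IntegrableOn (fun t : ℝ => B * t ^ (r + 1)) (Ioc 0 1) := by
      rw [integrableOn_Ioc_iff_integrableOn_Ioo]
      exact ((intervalIntegral.integrableOn_Ioo_rpow_iff zero_lt_one).2 (by linarith)).const_mul B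
    refine hdom.mono' hmeas.restrict ((ae_restrict_mem measurableSet_Ioc).mono fun t ht => ?_)
    rw [hnorm t ht.1, rpow_add_one ht.1.ne']
    calc t ^ r * (1 - exp (-(B * t))) ≤ t ^ r * (B * t) :=
          mul_le_mul_of_nonneg_left (by linarith [one_sub_le_exp_neg (B * t)])
            (rpow_nonneg ht.1.le r)
      _ = B * (t ^ r * t) := by ring
  · refine (integrableOn_Ioi_rpow_of_lt hr1 zero_lt_one).mono' hmeas.restrict
      ((ae_restrict_mem measurableSet_Ioi).mono fun t (ht : 1 < t) => ?_)
    rw [hnorm t (zero_lt_one.trans ht)]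
    exact mul_le_of_le_one_right (rpow_nonneg (zero_lt_one.trans ht).le r)
      (one_sub_exp_neg_le_one _)

lemma rpow_mul_mul_one_sub_exp_neg_le {τ s μ x y a b : ℝ} (hs0 : 0 < s) (hs1 : s ≤ 1)
    (hμ : 0 ≤ μ) (hx : 0 < x) (hy : 0 < y) (ha : 0 ≤ a) (hb : 0 ≤ b) :
    (x * y) ^ (-τ) * a * b * (1 - exp (-(μ * x * y))) ≤
      μ ^ s * (x ^ (s - τ) * a * (y ^ (s - τ) * b)) := by
  calc (x * y) ^ (-τ) * a * b * (1 - exp (-(μ * x * y)))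
      ≤ (x * y) ^ (-τ) * a * b * (μ * x * y) ^ s := by
        gcongr
        exact one_sub_exp_neg_le_rpow hs0 hs1 (by positivity)
    _ = μ ^ s * (x ^ (s - τ) * a * (y ^ (s - τ) * b)) := by
        rw [mul_rpow hx.le hy.le, mul_rpow (by positivity) hy.le, mul_rpow hμ hx.le,
          sub_eq_add_neg, rpow_add hx, rpow_add hy]
        ring

/-- Integrability on `(0,∞)²` of the integrand appearing in the paper's
Theorem 2, for `τ ∈ (2,3)`, `B > 0`, `μ > 0`. -/
theorem stmt_8 (τ B μ : ℝ) (hτ2 : 2 < τ) (hτ3 : τ < 3) (hB : 0 < B) (hμ : 0 < μ) :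
    IntegrableOn
      (fun p : ℝ × ℝ => (p.1 * p.2) ^ (-τ) * (1 - Real.exp (-(B * p.1)))
        * (1 - Real.exp (-(B * p.2))) * (1 - Real.exp (-(μ * p.1 * p.2))))
      (Set.Ioi 0 ×ˢ Set.Ioi 0) := by
  set s := (τ - 1) / 2 with hs
  have hg := integrableOn_Ioi_rpow_mul_one_sub_exp_neg (r := s - τ) (by linarith) (by linarith)
    hB.le
  refine ((hg.mul_prod hg).const_mul (μ ^ s)).mono' ?_ ?_
  · exact Measurable.aestronglyMeasurable (by fun_prop)
  filter_upwards [ae_restrict_mem (measurableSet_Ioi.prod measurableSet_Ioi)] with p ⟨hx, hy⟩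
  simp only [mem_Ioi] at hx hy
  have ha : 0 ≤ 1 - exp (-(B * p.1)) := one_sub_exp_neg_nonneg (by positivity)
  have hb : 0 ≤ 1 - exp (-(B * p.2)) := one_sub_exp_neg_nonneg (by positivity)
  have hc : 0 ≤ 1 - exp (-(μ * p.1 * p.2)) := one_sub_exp_neg_nonneg (by positivity)
  rw [norm_of_nonneg (by positivity)]
  exact rpow_mul_mul_one_sub_exp_neg_le (by linarith) (by linarith) hμ.le hx hy ha hb
end

section
/- Let τ be a real number with 2 < τ < 3 and let μ > 0. Then lim_{B → ∞} B² ∫₀^∞ ∫₀^∞ (x y)^{−τ} (1 − e^{−x})(1 − e^{−y})(1 − e^{−μ x y / B²}) dx dy = μ · ( ∫₀^∞ x^{1−τ}(1 − e^{−x}) dx )². -/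
/-!
Since `0 ≤ B² (1 - exp (-t / B²)) ≤ t` and the left side tends to `t` as `B → ∞`, dominated
convergence applies once `(x y)^(-τ) (1 - e^(-x)) (1 - e^(-y)) · μ x y = μ g(x) g(y)` is integrable,
where `g(x) = x^(1-τ) (1 - e^(-x))`. This is where `2 < τ < 3` enters: `g(x) ≤ x^(2-τ)` near
`0` and `g(x) ≤ x^(1-τ)` at infinity. The limit `μ (∫ g)²` then factorizes by Fubini.
-/

open MeasureTheory Filter Set Topology Real

lemma one_sub_exp_neg_nonneg_s10 {s : ℝ} (hs : 0 ≤ s) : 0 ≤ 1 - exp (-s) := by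
  linarith [exp_le_one_iff.mpr (neg_nonpos.mpr hs)]

lemma one_sub_exp_neg_le (s : ℝ) : 1 - exp (-s) ≤ s := by
  linarith [one_sub_le_exp_neg s]

lemma abs_sq_mul_one_sub_exp_neg_div_sq_le {t : ℝ} (ht : 0 ≤ t) (B : ℝ) :
    |B ^ 2 * (1 - exp (-(t / B ^ 2)))| ≤ t := by
  have hB : 0 ≤ B ^ 2 := sq_nonneg B
  rw [abs_of_nonneg (mul_nonneg hB (one_sub_exp_neg_nonneg_s10 (by positivity)))]
  calc B ^ 2 * (1 - exp (-(t / B ^ 2))) ≤ B ^ 2 * (t / B ^ 2) :=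
        mul_le_mul_of_nonneg_left (one_sub_exp_neg_le _) hB
    _ ≤ t := by
        rcases hB.eq_or_lt with h | h
        · simp [← h, ht]
        · rw [mul_div_cancel₀ _ h.ne']

lemma tendsto_sq_mul_one_sub_exp_neg_div_sq (c : ℝ) :
    Tendsto (fun B : ℝ => B ^ 2 * (1 - exp (-(c / B ^ 2)))) atTop (𝓝 c) := by
  have hderiv : HasDerivAt (fun t : ℝ => 1 - exp (-(c * t))) c 0 := by
    simpa using (((hasDerivAt_id (0 : ℝ)).const_mul c).neg.exp).const_sub 1
  have hinv : Tendsto (fun B : ℝ => (B ^ 2)⁻¹) atTop (𝓝[≠] 0) :=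
    tendsto_nhdsWithin_mono_right (fun _ h => ne_of_gt h)
      (tendsto_inv_atTop_nhdsGT_zero.comp (tendsto_pow_atTop two_ne_zero))
  refine ((hasDerivAt_iff_tendsto_slope.mp hderiv).comp hinv).congr' ?_
  filter_upwards [eventually_ne_atTop 0] with B hB
  simp [slope, div_eq_mul_inv]

lemma integrableOn_rpow_mul_one_sub_exp_neg {s : ℝ} (hs₁ : -2 < s) (hs₂ : s < -1) :
    IntegrableOn (fun x : ℝ => x ^ s * (1 - exp (-x))) (Ioi 0) := by
  have hmeas : AEStronglyMeasurable (fun x : ℝ => x ^ s * (1 - exp (-x))) := by fun_prop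
  have hnonneg : ∀ x : ℝ, 0 < x → ‖x ^ s * (1 - exp (-x))‖ = x ^ s * (1 - exp (-x)) :=
    fun x hx => norm_of_nonneg (mul_nonneg (rpow_nonneg hx.le s) (one_sub_exp_neg_nonneg_s10 hx.le))
  rw [← Ioc_union_Ioi_eq_Ioi zero_le_one]
  refine IntegrableOn.union ?_ ?_
  · have hpow : IntegrableOn (fun x : ℝ => x ^ (s + 1)) (Ioc 0 1) :=
      (integrableOn_Ioc_iff_integrableOn_Ioo).mpr
        ((intervalIntegral.integrableOn_Ioo_rpow_iff zero_lt_one).mpr (by linarith))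
    refine hpow.mono' hmeas.restrict ?_
    filter_upwards [ae_restrict_mem measurableSet_Ioc] with x hx
    rw [hnonneg x hx.1, rpow_add_one hx.1.ne']
    exact mul_le_mul_of_nonneg_left (one_sub_exp_neg_le x) (rpow_nonneg hx.1.le s)
  · refine (integrableOn_Ioi_rpow_of_lt hs₂ zero_lt_one).mono' hmeas.restrict ?_
    filter_upwards [ae_restrict_mem measurableSet_Ioi] with x hx
    have hx : (0 : ℝ) < x := zero_lt_one.trans hx
    rw [hnonneg x hx]
    exact mul_le_of_le_one_right (rpow_nonneg hx.le s) (by linarith [exp_pos (-x)])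

section Dominated

variable {α : Type*} [MeasurableSpace α] {ν : Measure α} {f φ : α → ℝ}

lemma integrable_mul_one_sub_exp_neg_div (hf : AEStronglyMeasurable f ν)
    (hφ : AEStronglyMeasurable φ ν) (hφ_nonneg : 0 ≤ᵐ[ν] φ)
    (hfφ : Integrable (fun z => f z * φ z) ν) {b : ℝ} (hb : 0 < b) :
    Integrable (fun z => f z * (1 - exp (-(φ z / b)))) ν := by
  refine (hfφ.norm.div_const b).mono' (hf.mul (by fun_prop)) ?_
  filter_upwards [hφ_nonneg] with z hz
  have ht : 0 ≤ φ z / b := div_nonneg hz hb.le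
  rw [norm_mul, norm_mul, Real.norm_of_nonneg (one_sub_exp_neg_nonneg_s10 ht),
    Real.norm_of_nonneg hz, mul_div_assoc]
  exact mul_le_mul_of_nonneg_left (one_sub_exp_neg_le _) (norm_nonneg _)

theorem tendsto_sq_mul_integral_mul_one_sub_exp_neg (hf : AEStronglyMeasurable f ν)
    (hφ : AEStronglyMeasurable φ ν) (hφ_nonneg : 0 ≤ᵐ[ν] φ)
    (hfφ : Integrable (fun z => f z * φ z) ν) :
    Tendsto (fun B : ℝ => B ^ 2 * ∫ z, f z * (1 - exp (-(φ z / B ^ 2))) ∂ν) atTop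
      (𝓝 (∫ z, f z * φ z ∂ν)) := by
  simp_rw [← integral_const_mul]
  refine tendsto_integral_filter_of_dominated_convergence (fun z => ‖f z * φ z‖)
    (Eventually.of_forall fun B => (hf.mul (by fun_prop)).const_mul _)
    (Eventually.of_forall fun B => ?_) hfφ.norm ?_
  · filter_upwards [hφ_nonneg] with z hz
    rw [mul_left_comm, norm_mul, norm_mul (f z), Real.norm_eq_abs (_ * _), Real.norm_of_nonneg hz]
    exact mul_le_mul_of_nonneg_left (abs_sq_mul_one_sub_exp_neg_div_sq_le hz B) (norm_nonneg _)
  · refine Eventually.of_forall fun z => ?_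
    simpa only [mul_left_comm] using (tendsto_sq_mul_one_sub_exp_neg_div_sq (φ z)).const_mul (f z)

end Dominated

/-- Large-`B` asymptotics in the paper's proof of Theorem 3. -/
theorem stmt_10 (τ μ : ℝ) (hτ2 : 2 < τ) (hτ3 : τ < 3) (hμ : 0 < μ) :
    Tendsto
      (fun B : ℝ => B ^ 2 *
        ∫ y in Set.Ioi (0 : ℝ), ∫ x in Set.Ioi (0 : ℝ),
          (x * y) ^ (-τ) * (1 - Real.exp (-x)) * (1 - Real.exp (-y))
            * (1 - Real.exp (-(μ * x * y / B ^ 2))))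
      atTop
      (nhds (μ * (∫ x in Set.Ioi (0 : ℝ), x ^ (1 - τ) * (1 - Real.exp (-x))) ^ 2)) := by
  -- Points of the quadrant are `z = (y, x)`, matching the order of the iterated integral.
  set ν : Measure (ℝ × ℝ) := (volume.restrict (Ioi 0)).prod (volume.restrict (Ioi 0))
  set f : ℝ × ℝ → ℝ := fun z => (z.2 * z.1) ^ (-τ) * (1 - exp (-z.2)) * (1 - exp (-z.1))
  set φ : ℝ × ℝ → ℝ := fun z => μ * z.2 * z.1
  set g : ℝ → ℝ := fun x => x ^ (1 - τ) * (1 - exp (-x))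
  have hpos : ∀ᵐ z ∂ν, 0 < z.1 ∧ 0 < z.2 := by
    simp only [ν, Measure.prod_restrict]
    exact ae_restrict_mem (measurableSet_Ioi.prod measurableSet_Ioi)
  have hfφ : (fun z => f z * φ z) =ᵐ[ν] fun z => μ * g z.1 * g z.2 := by
    filter_upwards [hpos] with z ⟨hy, hx⟩
    have : (z.2 * z.1) ^ (-τ) * (z.2 * z.1) = z.2 ^ (1 - τ) * z.1 ^ (1 - τ) := by
      rw [← rpow_add_one (by positivity), mul_rpow hx.le hy.le, neg_add_eq_sub]
    simp only [f, φ, g]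
    linear_combination μ * (1 - exp (-z.2)) * (1 - exp (-z.1)) * this
  have hg : IntegrableOn g (Ioi 0) :=
    integrableOn_rpow_mul_one_sub_exp_neg (by linarith) (by linarith)
  have hf : AEStronglyMeasurable f ν := by fun_prop
  have hφ : AEStronglyMeasurable φ ν := by fun_prop
  have hφ_nonneg : 0 ≤ᵐ[ν] φ := by
    filter_upwards [hpos] with z ⟨hy, hx⟩
    positivity
  have hint : Integrable (fun z => f z * φ z) ν :=
    ((hg.const_mul μ).mul_prod hg).congr hfφ.symm
  have hlim := tendsto_sq_mul_integral_mul_one_sub_exp_neg hf hφ hφ_nonneg hint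
  have hval : ∫ z, μ * g z.1 * g z.2 ∂ν = μ * (∫ x in Ioi 0, g x) ^ 2 :=
    (integral_prod_mul (fun y => μ * g y) g).trans (by rw [integral_const_mul]; ring)
  rw [integral_congr_ae hfφ, hval] at hlim
  refine hlim.congr' ?_
  filter_upwards [eventually_gt_atTop 0] with B hB
  have hI := integrable_mul_one_sub_exp_neg_div hf hφ hφ_nonneg hint (pow_pos hB 2)
  congr 1
  exact (integral_integral (f := fun y x => f (y, x) * (1 - exp (-(φ (y, x) / B ^ 2)))) hI).symm
end

section
/- Let τ be a real number with 2 < τ < 3 and let μ > 0. Define I(B) = ∫₀^∞ ∫₀^∞ (t₁ t₂)^{−τ} (1 − e^{−B t₁})(1 − e^{−B t₂})(1 − e^{−μ t₁ t₂}) dt₁ dt₂ for B > 0. Then lim_{B → 0⁺} I(B) / ( 2 B² log(1/B) ) = μ^{τ−2} ∫₀^∞ u^{1−τ}(1 − e^{−u}) du. -/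
open MeasureTheory Filter Set Real

-- exp helpers
lemma eaux0 {x : ℝ} (hx : 0 ≤ x) : 0 ≤ 1 - Real.exp (-x) := by
  have : Real.exp (-x) ≤ 1 := Real.exp_le_one_iff.mpr (by linarith)
  linarith

lemma eaux1 {x : ℝ} (hx : 0 ≤ x) : 1 - Real.exp (-x) ≤ x := by
  have := Real.add_one_le_exp (-x)
  linarith

lemma eaux_le_one {x : ℝ} (hx : 0 ≤ x) : 1 - Real.exp (-x) ≤ 1 := by
  have := Real.exp_pos (-x); linarith

lemma eauxp {p x : ℝ} (hp0 : 0 < p) (hp1 : p ≤ 1) (hx : 0 ≤ x) :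
    1 - Real.exp (-x) ≤ x ^ p := by
  rcases eq_or_lt_of_le hx with h | h
  · simp [← h, Real.zero_rpow hp0.ne']
  rcases le_or_gt x 1 with h1 | h1
  · calc 1 - Real.exp (-x) ≤ x := eaux1 hx
    _ = x ^ (1:ℝ) := (Real.rpow_one x).symm
    _ ≤ x ^ p := Real.rpow_le_rpow_of_exponent_ge h h1 hp1
  · calc 1 - Real.exp (-x) ≤ 1 := eaux_le_one hx
    _ ≤ x ^ p := Real.one_le_rpow h1.le hp0.le

lemma eauxq {q x : ℝ} (hq1 : 1 ≤ q) (hq2 : q ≤ 2) (hx : 0 ≤ x) :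
    x - (1 - Real.exp (-x)) ≤ x ^ q := by
  rcases eq_or_lt_of_le hx with h | h
  · simp [← h, Real.zero_rpow (by linarith : q ≠ 0)]
  rcases le_or_gt x 1 with h1 | h1
  · have habs : |Real.exp (-x) - 1 - (-x)| ≤ (-x) ^ 2 :=
      Real.abs_exp_sub_one_sub_id_le (by rw [abs_neg, abs_of_nonneg hx]; exact h1)
    have h2 : x - (1 - Real.exp (-x)) ≤ x ^ (2:ℕ) := by
      have := abs_le.mp habs
      have := this.2
      nlinarith [sq_nonneg x]
    calc x - (1 - Real.exp (-x)) ≤ x ^ (2:ℕ) := h2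
    _ = x ^ (2:ℝ) := (Real.rpow_natCast x 2).symm
    _ ≤ x ^ q := Real.rpow_le_rpow_of_exponent_ge h h1 hq2
  · calc x - (1 - Real.exp (-x)) ≤ x := by have := eaux0 hx; linarith
    _ = x ^ (1:ℝ) := (Real.rpow_one x).symm
    _ ≤ x ^ q := Real.rpow_le_rpow_of_exponent_le h1.le hq1

lemma eaux_low {x : ℝ} (hx : 0 ≤ x) (h1 : x ≤ 1) : x - x ^ 2 ≤ 1 - Real.exp (-x) := by
  have habs : |Real.exp (-x) - 1 - (-x)| ≤ (-x) ^ 2 :=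
    Real.abs_exp_sub_one_sub_id_le (by rw [abs_neg, abs_of_nonneg hx]; exact h1)
  have := (abs_le.mp habs).2
  nlinarith [sq_nonneg x]

-- measurability of standard integrand
lemma meas_base (c : ℝ) : Measurable (fun u : ℝ => u ^ c * (1 - Real.exp (-u))) := by
  fun_prop

-- master integrability
lemma integrable_master {c : ℝ} (h1 : -2 < c) (h2 : c < -1) :
    IntegrableOn (fun u : ℝ => u ^ c * (1 - Real.exp (-u))) (Ioi 0) := by
  have hsplit : Ioi (0:ℝ) = Ioo 0 1 ∪ Ici 1 := by
    ext x; simp only [mem_Ioi, mem_union, mem_Ioo, mem_Ici]; constructor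
    · intro hx; rcases lt_or_ge x 1 with h | h
      · exact Or.inl ⟨hx, h⟩
      · exact Or.inr h
    · rintro (⟨h, _⟩ | h) <;> linarith
  rw [hsplit]
  apply IntegrableOn.union
  · -- on Ioo 0 1 : dominated by u ^ (c+1)
    have hint : IntegrableOn (fun u : ℝ => u ^ (c+1)) (Ioo 0 1) :=
      (intervalIntegral.integrableOn_Ioo_rpow_iff zero_lt_one).mpr (by linarith)
    apply Integrable.mono' hint ((meas_base c).aestronglyMeasurable)
    filter_upwards [ae_restrict_mem measurableSet_Ioo] with u hu
    have hu0 : 0 < u := hu.1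
    rw [Real.norm_eq_abs, abs_of_nonneg (mul_nonneg (Real.rpow_nonneg hu0.le _) (eaux0 hu0.le))]
    calc u ^ c * (1 - Real.exp (-u)) ≤ u ^ c * u :=
      mul_le_mul_of_nonneg_left (eaux1 hu0.le) (Real.rpow_nonneg hu0.le _)
    _ = u ^ (c + 1) := by rw [Real.rpow_add_one hu0.ne']
  · -- on Ici 1 : dominated by u ^ c
    have hint : IntegrableOn (fun u : ℝ => u ^ c) (Ioi 1) :=
      (integrableOn_Ioi_rpow_iff zero_lt_one).mpr h2
    have hint' : IntegrableOn (fun u : ℝ => u ^ c) (Ici 1) := by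
      rwa [IntegrableOn, Measure.restrict_congr_set Ioi_ae_eq_Ici] at hint
    apply Integrable.mono' hint' ((meas_base c).aestronglyMeasurable)
    filter_upwards [ae_restrict_mem measurableSet_Ici] with u hu
    have hu0 : (0:ℝ) < u := lt_of_lt_of_le zero_lt_one hu
    rw [Real.norm_eq_abs, abs_of_nonneg (mul_nonneg (Real.rpow_nonneg hu0.le _) (eaux0 hu0.le))]
    calc u ^ c * (1 - Real.exp (-u)) ≤ u ^ c * 1 :=
      mul_le_mul_of_nonneg_left (eaux_le_one hu0.le) (Real.rpow_nonneg hu0.le _)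
    _ = u ^ c := mul_one _

noncomputable def Fa (τ a : ℝ) : ℝ :=
  ∫ u in Ioi (0:ℝ), u ^ (-τ) * (1 - Real.exp (-(max a 0 * u))) * (1 - Real.exp (-u))

lemma meas_Fa_integrand (τ a : ℝ) :
    Measurable (fun u : ℝ => u ^ (-τ) * (1 - Real.exp (-(a * u))) * (1 - Real.exp (-u))) := by
  fun_prop

lemma integrable_Fa {τ : ℝ} (hτ2 : 2 < τ) (hτ3 : τ < 3) {a : ℝ} (ha : 0 ≤ a) :
    IntegrableOn
      (fun u : ℝ => u ^ (-τ) * (1 - Real.exp (-(a * u))) * (1 - Real.exp (-u))) (Ioi 0) := by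
  have hint : IntegrableOn (fun u : ℝ => a * (u ^ (1-τ) * (1 - Real.exp (-u)))) (Ioi 0) :=
    (integrable_master (by linarith) (by linarith)).const_mul a
  apply Integrable.mono' hint (meas_Fa_integrand τ a).aestronglyMeasurable
  filter_upwards [ae_restrict_mem measurableSet_Ioi] with u hu
  have hu0 : (0:ℝ) < u := hu
  have haun : 0 ≤ a * u := mul_nonneg ha hu0.le
  rw [Real.norm_eq_abs, abs_of_nonneg (mul_nonneg (mul_nonneg (Real.rpow_nonneg hu0.le _)
    (eaux0 haun)) (eaux0 hu0.le))]
  calc u ^ (-τ) * (1 - Real.exp (-(a * u))) * (1 - Real.exp (-u))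
      ≤ u ^ (-τ) * (a * u) * (1 - Real.exp (-u)) := by
        apply mul_le_mul_of_nonneg_right _ (eaux0 hu0.le)
        exact mul_le_mul_of_nonneg_left (eaux1 haun) (Real.rpow_nonneg hu0.le _)
    _ = a * (u ^ (1-τ) * (1 - Real.exp (-u))) := by
        rw [show (1-τ) = -τ + 1 by ring, Real.rpow_add_one hu0.ne']; ring

lemma Fa_eq {τ a : ℝ} (ha : 0 ≤ a) :
    Fa τ a = ∫ u in Ioi (0:ℝ),
      u ^ (-τ) * (1 - Real.exp (-(a * u))) * (1 - Real.exp (-u)) := by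
  rw [Fa, max_eq_left ha]

lemma Fa_nonneg (τ a : ℝ) : 0 ≤ Fa τ a := by
  apply setIntegral_nonneg measurableSet_Ioi
  intro u hu
  have hu0 : (0:ℝ) < u := hu
  exact mul_nonneg (mul_nonneg (Real.rpow_nonneg hu0.le _)
    (eaux0 (mul_nonneg (le_max_right a 0) hu0.le))) (eaux0 hu0.le)

lemma Fa_mono {τ : ℝ} (hτ2 : 2 < τ) (hτ3 : τ < 3) : Monotone (Fa τ) := by
  intro a b hab
  rw [Fa, Fa]
  apply setIntegral_mono_on
  · exact integrable_Fa hτ2 hτ3 (le_max_right a 0)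
  · exact integrable_Fa hτ2 hτ3 (le_max_right b 0)
  · exact measurableSet_Ioi
  · intro u hu
    have hu0 : (0:ℝ) < u := hu
    apply mul_le_mul_of_nonneg_right _ (eaux0 hu0.le)
    apply mul_le_mul_of_nonneg_left _ (Real.rpow_nonneg hu0.le _)
    have : max a 0 * u ≤ max b 0 * u :=
      mul_le_mul_of_nonneg_right (max_le_max hab le_rfl) hu0.le
    have := Real.exp_le_exp.mpr (neg_le_neg this)
    linarith

lemma Fa_measurable {τ : ℝ} (hτ2 : 2 < τ) (hτ3 : τ < 3) : Measurable (Fa τ) :=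
  (Fa_mono hτ2 hτ3).measurable

/-- upper bound `Fa τ a ≤ a^r * ∫ u^{r-τ}(1-e^{-u})` for `r ∈ (τ-2, 1]`. -/
lemma Fa_le {τ : ℝ} (hτ2 : 2 < τ) (hτ3 : τ < 3) {a r : ℝ} (ha : 0 ≤ a)
    (hr0 : 0 < r) (hr1 : r ≤ 1) (hr2 : τ - 2 < r) :
    Fa τ a ≤ a ^ r * ∫ u in Ioi (0:ℝ), u ^ (r - τ) * (1 - Real.exp (-u)) := by
  rw [Fa_eq ha, ← integral_const_mul]
  apply setIntegral_mono_on
  · exact integrable_Fa hτ2 hτ3 ha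
  · exact ((integrable_master (by linarith) (by linarith)).const_mul _)
  · exact measurableSet_Ioi
  · intro u hu
    have hu0 : (0:ℝ) < u := hu
    have haun : 0 ≤ a * u := mul_nonneg ha hu0.le
    calc u ^ (-τ) * (1 - Real.exp (-(a * u))) * (1 - Real.exp (-u))
        ≤ u ^ (-τ) * (a * u) ^ r * (1 - Real.exp (-u)) := by
          apply mul_le_mul_of_nonneg_right _ (eaux0 hu0.le)
          exact mul_le_mul_of_nonneg_left (eauxp hr0 hr1 haun) (Real.rpow_nonneg hu0.le _)
      _ = a ^ r * (u ^ (r - τ) * (1 - Real.exp (-u))) := by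
          rw [Real.mul_rpow ha hu0.le, show (r - τ) = -τ + r by ring,
            Real.rpow_add hu0]; ring

/-- lower bound: `a*J - Fa τ a ≤ a^q * ∫ u^{q-τ}(1-e^{-u})` for `q ∈ [1, τ-1)`. -/
lemma Fa_lower {τ : ℝ} (hτ2 : 2 < τ) (hτ3 : τ < 3) {a q : ℝ} (ha : 0 ≤ a)
    (hq1 : 1 ≤ q) (hq2 : q < τ - 1) :
    a * (∫ u in Ioi (0:ℝ), u ^ (1 - τ) * (1 - Real.exp (-u))) - Fa τ a
      ≤ a ^ q * ∫ u in Ioi (0:ℝ), u ^ (q - τ) * (1 - Real.exp (-u)) := by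
  rw [Fa_eq ha, ← integral_const_mul, ← integral_const_mul, ← integral_sub
    ((integrable_master (by linarith) (by linarith)).const_mul _)
    (integrable_Fa hτ2 hτ3 ha)]
  apply setIntegral_mono_on
  · exact Integrable.sub ((integrable_master (by linarith) (by linarith)).const_mul _)
      (integrable_Fa hτ2 hτ3 ha)
  · exact ((integrable_master (by linarith) (by linarith)).const_mul _)
  · exact measurableSet_Ioi
  · intro u hu
    have hu0 : (0:ℝ) < u := hu
    have haun : 0 ≤ a * u := mul_nonneg ha hu0.le
    have key : a * u - (1 - Real.exp (-(a * u))) ≤ (a * u) ^ q :=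
      eauxq hq1 (by linarith) haun
    have e1 : a * (u ^ (1 - τ) * (1 - Real.exp (-u)))
        - u ^ (-τ) * (1 - Real.exp (-(a * u))) * (1 - Real.exp (-u))
        = u ^ (-τ) * (1 - Real.exp (-u)) * (a * u - (1 - Real.exp (-(a * u)))) := by
      rw [show (1 - τ) = -τ + 1 by ring, Real.rpow_add_one hu0.ne']; ring
    have e2 : a ^ q * (u ^ (q - τ) * (1 - Real.exp (-u)))
        = u ^ (-τ) * (1 - Real.exp (-u)) * (a * u) ^ q := by
      rw [Real.mul_rpow ha hu0.le, show (q - τ) = -τ + q by ring, Real.rpow_add hu0]; ring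
    rw [e1, e2]
    exact mul_le_mul_of_nonneg_left key
      (mul_nonneg (Real.rpow_nonneg hu0.le _) (eaux0 hu0.le))

noncomputable def Gfun (τ μ ε : ℝ) : ℝ :=
  ∫ s in Ioi (0:ℝ), s⁻¹ * (1 - Real.exp (-s)) * Fa τ (ε / (μ * s))

lemma inner_eval {τ μ B t₂ : ℝ} (hμ : 0 < μ) (hB : 0 < B) (ht : 0 < t₂) :
    (∫ t₁ in Ioi (0:ℝ),
        (t₁ * t₂) ^ (-τ) * (1 - Real.exp (-(B * t₁))) * (1 - Real.exp (-(B * t₂)))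
          * (1 - Real.exp (-(μ * t₁ * t₂))))
      = (1 - Real.exp (-(B * t₂))) *
          (μ ^ (τ-1) * (t₂⁻¹ * Fa τ (B / (μ * t₂)))) := by
  have hc : 0 < μ * t₂ := mul_pos hμ ht
  set c := μ * t₂ with hcdef
  set φ : ℝ → ℝ := fun u => u ^ (-τ) * (1 - Real.exp (-((B/c) * u))) * (1 - Real.exp (-u))
    with hφ
  have step1 : (∫ t₁ in Ioi (0:ℝ),
      (t₁ * t₂) ^ (-τ) * (1 - Real.exp (-(B * t₁))) * (1 - Real.exp (-(B * t₂)))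
        * (1 - Real.exp (-(μ * t₁ * t₂))))
      = ∫ t₁ in Ioi (0:ℝ),
        ((1 - Real.exp (-(B * t₂))) * (t₂ ^ (-τ) * c ^ τ)) * φ (c * t₁) := by
    apply setIntegral_congr_fun measurableSet_Ioi
    intro t₁ ht₁
    have ht₁0 : (0:ℝ) < t₁ := ht₁
    have e1 : (B/c) * (c * t₁) = B * t₁ := by field_simp
    have e2 : c * t₁ = μ * t₁ * t₂ := by rw [hcdef]; ring
    have e3 : (c * t₁) ^ (-τ) = c ^ (-τ) * t₁ ^ (-τ) := Real.mul_rpow hc.le ht₁0.le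
    have e4 : (t₁ * t₂) ^ (-τ) = t₁ ^ (-τ) * t₂ ^ (-τ) := Real.mul_rpow ht₁0.le ht.le
    have e5 : c ^ τ * c ^ (-τ) = 1 := by
      rw [← Real.rpow_add hc]; simp
    have hphi : φ (c * t₁) = (c ^ (-τ) * t₁ ^ (-τ)) * (1 - Real.exp (-(B * t₁)))
        * (1 - Real.exp (-(μ * t₁ * t₂))) := by
      simp only [hφ]
      rw [e3, e1, e2]
    dsimp only
    rw [e4, hphi]
    linear_combination (-((1 - Real.exp (-(B*t₂))) * t₂ ^ (-τ) * t₁ ^ (-τ)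
      * (1 - Real.exp (-(B*t₁))) * (1 - Real.exp (-(μ*t₁*t₂))))) * e5
  rw [step1, integral_const_mul, integral_comp_mul_left_Ioi φ 0 hc, mul_zero]
  have hFa : (∫ u in Ioi (0:ℝ), φ u) = Fa τ (B / c) :=
    (Fa_eq (by positivity)).symm
  rw [smul_eq_mul, hFa]
  have e6 : t₂ ^ (-τ) * c ^ τ * (c⁻¹ * Fa τ (B / c))
      = μ ^ (τ-1) * (t₂⁻¹ * Fa τ (B / c)) := by
    have : c ^ τ * c⁻¹ = c ^ (τ - 1) := by
      rw [← Real.rpow_neg_one c, ← Real.rpow_add hc, show τ + -1 = τ - 1 by ring]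
    have e7 : c ^ (τ-1) = μ ^ (τ-1) * t₂ ^ (τ-1) := Real.mul_rpow hμ.le ht.le
    have e8 : t₂ ^ (-τ) * t₂ ^ (τ-1) = t₂⁻¹ := by
      rw [← Real.rpow_add ht, show -τ + (τ-1) = -1 by ring, Real.rpow_neg_one]
    calc t₂ ^ (-τ) * c ^ τ * (c⁻¹ * Fa τ (B / c))
        = t₂ ^ (-τ) * (c ^ τ * c⁻¹) * Fa τ (B / c) := by ring
      _ = t₂ ^ (-τ) * (μ ^ (τ-1) * t₂ ^ (τ-1)) * Fa τ (B / c) := by rw [this, e7]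
      _ = μ ^ (τ-1) * (t₂ ^ (-τ) * t₂ ^ (τ-1)) * Fa τ (B / c) := by ring
      _ = μ ^ (τ-1) * (t₂⁻¹ * Fa τ (B / c)) := by rw [e8]; ring
  rw [mul_assoc, e6]

lemma outer_eval {τ μ B : ℝ} (hμ : 0 < μ) (hB : 0 < B) :
    (∫ t₂ in Ioi (0:ℝ), ∫ t₁ in Ioi (0:ℝ),
        (t₁ * t₂) ^ (-τ) * (1 - Real.exp (-(B * t₁))) * (1 - Real.exp (-(B * t₂)))
          * (1 - Real.exp (-(μ * t₁ * t₂))))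
      = μ ^ (τ-1) * Gfun τ μ (B^2) := by
  set g : ℝ → ℝ := fun s => s⁻¹ * (1 - Real.exp (-s)) * Fa τ (B^2 / (μ * s)) with hg
  have step1 : (∫ t₂ in Ioi (0:ℝ), ∫ t₁ in Ioi (0:ℝ),
      (t₁ * t₂) ^ (-τ) * (1 - Real.exp (-(B * t₁))) * (1 - Real.exp (-(B * t₂)))
        * (1 - Real.exp (-(μ * t₁ * t₂))))
      = ∫ t₂ in Ioi (0:ℝ), (μ ^ (τ-1) * B) * g (B * t₂) := by
    apply setIntegral_congr_fun measurableSet_Ioi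
    intro t₂ ht₂
    have ht : (0:ℝ) < t₂ := ht₂
    dsimp only
    rw [inner_eval hμ hB ht]
    have e1 : B^2 / (μ * (B * t₂)) = B / (μ * t₂) := by
      field_simp
    simp only [hg, e1]
    have hBne : B ≠ 0 := hB.ne'
    have htne : t₂ ≠ 0 := ht.ne'
    field_simp
  rw [step1, integral_const_mul, integral_comp_mul_left_Ioi g 0 hB, mul_zero, smul_eq_mul]
  have : (∫ s in Ioi (0:ℝ), g s) = Gfun τ μ (B^2) := rfl
  rw [this]
  field_simp

noncomputable def Jint (τ : ℝ) : ℝ := ∫ u in Ioi (0:ℝ), u ^ (1 - τ) * (1 - Real.exp (-u))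

lemma Jint_nonneg (τ : ℝ) : 0 ≤ Jint τ := by
  apply setIntegral_nonneg measurableSet_Ioi
  intro u hu
  exact mul_nonneg (Real.rpow_nonneg (le_of_lt hu) _) (eaux0 (le_of_lt hu))

/-- tail integrability of `s^c (1-e^{-s})` on `Ioi ε` for `c < -1`. -/
lemma integrable_tail {c ε : ℝ} (hc : c < -1) (hε : 0 < ε) :
    IntegrableOn (fun s : ℝ => s ^ c * (1 - Real.exp (-s))) (Ioi ε) := by
  have hint : IntegrableOn (fun s : ℝ => s ^ c) (Ioi ε) :=
    (integrableOn_Ioi_rpow_iff hε).mpr hc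
  apply Integrable.mono' hint (by fun_prop : Measurable fun s : ℝ =>
    s ^ c * (1 - Real.exp (-s))).aestronglyMeasurable
  filter_upwards [ae_restrict_mem measurableSet_Ioi] with s hs
  have hs0 : 0 < s := hε.trans hs
  rw [Real.norm_eq_abs, abs_of_nonneg (mul_nonneg (Real.rpow_nonneg hs0.le _) (eaux0 hs0.le))]
  calc s ^ c * (1 - Real.exp (-s)) ≤ s ^ c * 1 :=
    mul_le_mul_of_nonneg_left (eaux_le_one hs0.le) (Real.rpow_nonneg hs0.le _)
  _ = s ^ c := mul_one _

/-- The `M` integral and its log asymptotics. -/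
lemma M_bounds {ε : ℝ} (hε0 : 0 < ε) (hε1 : ε < 1) :
    |(∫ s in Ioi ε, s ^ (-2:ℝ) * (1 - Real.exp (-s))) - Real.log (1/ε)| ≤ 1 := by
  have hsplit : (∫ s in Ioi ε, s ^ (-2:ℝ) * (1 - Real.exp (-s)))
      = (∫ s in Ioc ε 1, s ^ (-2:ℝ) * (1 - Real.exp (-s)))
        + ∫ s in Ioi (1:ℝ), s ^ (-2:ℝ) * (1 - Real.exp (-s)) := by
    rw [← setIntegral_union (Ioc_disjoint_Ioi le_rfl) measurableSet_Ioi
      ((integrable_tail (by norm_num) hε0).mono_set Ioc_subset_Ioi_self)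
      ((integrable_tail (by norm_num) hε0).mono_set (Ioi_subset_Ioi hε1.le)),
      Ioc_union_Ioi_eq_Ioi hε1.le]
  have hIoc_int : IntegrableOn (fun s : ℝ => s ^ (-2:ℝ) * (1 - Real.exp (-s))) (Ioc ε 1) :=
    (integrable_tail (by norm_num) hε0).mono_set Ioc_subset_Ioi_self
  have hinv_int : IntegrableOn (fun s : ℝ => s⁻¹) (Ioc ε 1) := by
    apply Integrable.mono'
      (integrableOn_const measure_Ioc_lt_top.ne :
        IntegrableOn (fun _ : ℝ => ε⁻¹) (Ioc ε 1) volume)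
      measurable_inv.aestronglyMeasurable
    filter_upwards [ae_restrict_mem measurableSet_Ioc] with s hs
    rw [Real.norm_eq_abs, abs_of_nonneg (inv_nonneg.mpr (hε0.trans hs.1).le)]
    exact inv_anti₀ hε0 hs.1.le
  have hinv_val : (∫ s in Ioc ε 1, s⁻¹) = Real.log (1/ε) := by
    rw [← intervalIntegral.integral_of_le hε1.le, integral_inv_of_pos hε0 one_pos]
  -- upper bound on Ioc part
  have hup : (∫ s in Ioc ε 1, s ^ (-2:ℝ) * (1 - Real.exp (-s))) ≤ Real.log (1/ε) := by
    rw [← hinv_val]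
    apply setIntegral_mono_on hIoc_int hinv_int measurableSet_Ioc
    intro s hs
    have hs0 : 0 < s := hε0.trans hs.1
    calc s ^ (-2:ℝ) * (1 - Real.exp (-s)) ≤ s ^ (-2:ℝ) * s :=
      mul_le_mul_of_nonneg_left (eaux1 hs0.le) (Real.rpow_nonneg hs0.le _)
    _ = s⁻¹ := by
      rw [show (-2:ℝ) = -1 + -1 by norm_num, Real.rpow_add hs0, Real.rpow_neg_one]
      field_simp
  -- lower bound on Ioc part
  have hlow : Real.log (1/ε) - (1 - ε) ≤ ∫ s in Ioc ε 1, s ^ (-2:ℝ) * (1 - Real.exp (-s)) := by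
    have hsub_int : IntegrableOn (fun s : ℝ => s⁻¹ - 1) (Ioc ε 1) :=
      hinv_int.sub (integrableOn_const measure_Ioc_lt_top.ne)
    have : (∫ s in Ioc ε 1, (s⁻¹ - 1)) = Real.log (1/ε) - (1 - ε) := by
      rw [integral_sub hinv_int (integrableOn_const measure_Ioc_lt_top.ne),
        hinv_val, setIntegral_const, smul_eq_mul, mul_one, Real.volume_real_Ioc_of_le hε1.le]
    rw [← this]
    apply setIntegral_mono_on hsub_int hIoc_int measurableSet_Ioc
    intro s hs
    have hs0 : 0 < s := hε0.trans hs.1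
    have key : s - s^2 ≤ 1 - Real.exp (-s) := eaux_low hs0.le hs.2
    have : s ^ (-2:ℝ) * (s - s^2) = s⁻¹ - 1 := by
      rw [show (-2:ℝ) = -(2:ℕ) by norm_num, Real.rpow_neg hs0.le, Real.rpow_natCast]
      field_simp
    rw [← this]
    exact mul_le_mul_of_nonneg_left key (Real.rpow_nonneg hs0.le _)
  -- tail part in [0,1]
  have htail_up : (∫ s in Ioi (1:ℝ), s ^ (-2:ℝ) * (1 - Real.exp (-s))) ≤ 1 := by
    have hval : (∫ s in Ioi (1:ℝ), s ^ (-2:ℝ)) = 1 := by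
      rw [integral_Ioi_rpow_of_lt (by norm_num) one_pos]
      norm_num
    have hmono : (∫ s in Ioi (1:ℝ), s ^ (-2:ℝ) * (1 - Real.exp (-s)))
        ≤ ∫ s in Ioi (1:ℝ), s ^ (-2:ℝ) := by
      apply setIntegral_mono_on
        ((integrable_tail (by norm_num) one_pos))
        ((integrableOn_Ioi_rpow_iff one_pos).mpr (by norm_num))
        measurableSet_Ioi
      intro s hs
      have hs0 : (0:ℝ) < s := lt_trans one_pos hs
      calc s ^ (-2:ℝ) * (1 - Real.exp (-s)) ≤ s ^ (-2:ℝ) * 1 :=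
        mul_le_mul_of_nonneg_left (eaux_le_one hs0.le) (Real.rpow_nonneg hs0.le _)
      _ = s ^ (-2:ℝ) := mul_one _
    linarith
  have htail_low : 0 ≤ ∫ s in Ioi (1:ℝ), s ^ (-2:ℝ) * (1 - Real.exp (-s)) := by
    apply setIntegral_nonneg measurableSet_Ioi
    intro s hs
    have hs0 : (0:ℝ) < s := lt_trans one_pos hs
    exact mul_nonneg (Real.rpow_nonneg hs0.le _) (eaux0 hs0.le)
  rw [hsplit, abs_le]
  constructor <;> linarith

lemma G_bound {τ μ : ℝ} (hτ2 : 2 < τ) (hτ3 : τ < 3) (hμ : 0 < μ) :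
    ∃ C : ℝ, 0 < C ∧ ∀ ε ∈ Ioo (0:ℝ) 1,
      |Gfun τ μ ε - ε * Jint τ / μ * Real.log (1/ε)| ≤ C * ε := by
  set p : ℝ := (τ-1)/2 with hp
  set q : ℝ := τ/2 with hq
  have hp0 : 0 < p := by rw [hp]; linarith
  have hp1 : p < 1 := by rw [hp]; linarith
  have hp2 : τ - 2 < p := by rw [hp]; linarith
  have hq1 : 1 < q := by rw [hq]; linarith
  have hq2 : q < τ - 1 := by rw [hq]; linarith
  set Kp : ℝ := ∫ u in Ioi (0:ℝ), u ^ (p - τ) * (1 - Real.exp (-u)) with hKpd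
  set Kq : ℝ := ∫ u in Ioi (0:ℝ), u ^ (q - τ) * (1 - Real.exp (-u)) with hKqd
  have hKp : 0 ≤ Kp := setIntegral_nonneg measurableSet_Ioi fun u hu =>
    mul_nonneg (Real.rpow_nonneg (le_of_lt hu) _) (eaux0 (le_of_lt hu))
  have hKq : 0 ≤ Kq := setIntegral_nonneg measurableSet_Ioi fun u hu =>
    mul_nonneg (Real.rpow_nonneg (le_of_lt hu) _) (eaux0 (le_of_lt hu))
  set CA : ℝ := Kp * (μ ^ p)⁻¹ / (1 - p) with hCA
  set CB : ℝ := Kq * (μ ^ q)⁻¹ * (1/(q-1) + 1/q) with hCB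
  have hCA0 : 0 ≤ CA := by
    apply div_nonneg (mul_nonneg hKp (inv_nonneg.mpr (Real.rpow_nonneg hμ.le _))) (by linarith)
  have hCB0 : 0 ≤ CB := by
    apply mul_nonneg (mul_nonneg hKq (inv_nonneg.mpr (Real.rpow_nonneg hμ.le _)))
    have h1 : 0 < 1/(q-1) := one_div_pos.mpr (by linarith)
    have h2 : 0 < 1/q := one_div_pos.mpr (by linarith)
    linarith
  have hJ0 : 0 ≤ Jint τ / μ := div_nonneg (Jint_nonneg τ) hμ.le
  refine ⟨CA + CB + Jint τ / μ + 1, by linarith, ?_⟩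
  rintro ε ⟨hε0, hε1⟩
  set f : ℝ → ℝ := fun s => s⁻¹ * (1 - Real.exp (-s)) * Fa τ (ε / (μ * s)) with hf
  -- generic rpow splitting
  have hsr : ∀ r s : ℝ, 0 < s → (ε/(μ*s)) ^ r = (ε/μ) ^ r * s ^ (-r) := by
    intro r s hs
    rw [div_mul_eq_div_div, div_eq_mul_inv (ε/μ),
      Real.mul_rpow (by positivity) (inv_nonneg.mpr hs.le), Real.inv_rpow hs.le,
      ← Real.rpow_neg hs.le]
  have hprod : ∀ r s : ℝ, 0 < s → s⁻¹ * s ^ (-r) = s ^ (-1-r) := by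
    intro r s hs
    rw [show (-1-r : ℝ) = -1 + -r by ring, Real.rpow_add hs, Real.rpow_neg_one]
  have hfront : ∀ s : ℝ, 0 < s → 0 ≤ s⁻¹ * (1 - Real.exp (-s))
      ∧ s⁻¹ * (1 - Real.exp (-s)) ≤ 1 := by
    intro s hs
    constructor
    · exact mul_nonneg (inv_nonneg.mpr hs.le) (eaux0 hs.le)
    · calc s⁻¹ * (1 - Real.exp (-s)) ≤ s⁻¹ * s :=
        mul_le_mul_of_nonneg_left (eaux1 hs.le) (inv_nonneg.mpr hs.le)
      _ = 1 := inv_mul_cancel₀ hs.ne'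
  have hanonneg : ∀ s : ℝ, 0 < s → 0 ≤ ε / (μ * s) := fun s hs => by positivity
  have hfnn : ∀ s ∈ Ioi (0:ℝ), 0 ≤ f s := by
    intro s hs
    exact mul_nonneg (hfront s hs).1 (Fa_nonneg τ _)
  have hmf : Measurable f := by
    have h1 : Measurable fun s : ℝ => ε / (μ * s) :=
      measurable_const.div (measurable_id.const_mul μ)
    exact (measurable_inv.mul (by fun_prop)).mul ((Fa_measurable hτ2 hτ3).comp h1)
  -- integrability of f on Ioi 0
  have hfb : ∀ s ∈ Ioi (0:ℝ), f s ≤ Kp * (ε/μ) ^ p * (s ^ (-1-p) * (1 - Real.exp (-s))) := by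
    intro s hs
    have hs0 : (0:ℝ) < s := hs
    have hFaub : Fa τ (ε / (μ * s)) ≤ (ε/μ) ^ p * s ^ (-p) * Kp := by
      have := Fa_le hτ2 hτ3 (hanonneg s hs0) hp0 hp1.le hp2
      rw [hsr p s hs0] at this
      rw [← hKpd] at this
      linarith [this]
    calc f s ≤ (s⁻¹ * (1 - Real.exp (-s))) * ((ε/μ) ^ p * s ^ (-p) * Kp) :=
      mul_le_mul_of_nonneg_left hFaub (hfront s hs0).1
    _ = Kp * (ε/μ) ^ p * ((s⁻¹ * s ^ (-p)) * (1 - Real.exp (-s))) := by ring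
    _ = Kp * (ε/μ) ^ p * (s ^ (-1-p) * (1 - Real.exp (-s))) := by rw [hprod p s hs0]
  have hf_int : IntegrableOn f (Ioi 0) := by
    apply Integrable.mono'
      ((integrable_master (by linarith : (-2:ℝ) < -1-p) (by linarith)).const_mul
        (Kp * (ε/μ) ^ p))
      hmf.aestronglyMeasurable
    filter_upwards [ae_restrict_mem measurableSet_Ioi] with s hs
    rw [Real.norm_eq_abs, abs_of_nonneg (hfnn s hs)]
    exact hfb s hs
  have hf_int' : IntegrableOn f (Ioi ε) := hf_int.mono_set (Ioi_subset_Ioi hε0.le)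
  have hf_intc : IntegrableOn f (Ioc 0 ε) := hf_int.mono_set Ioc_subset_Ioi_self
  have hGsplit : Gfun τ μ ε = (∫ s in Ioc 0 ε, f s) + ∫ s in Ioi ε, f s := by
    rw [Gfun, ← Ioc_union_Ioi_eq_Ioi hε0.le,
      setIntegral_union (Ioc_disjoint_Ioi le_rfl) measurableSet_Ioi hf_intc hf_int']
  -- Estimate A : small s part
  have hrp_int : IntegrableOn (fun s : ℝ => s ^ (-p)) (Ioc 0 ε) := by
    rw [IntegrableOn, Measure.restrict_congr_set Ioo_ae_eq_Ioc.symm]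
    exact (intervalIntegral.integrableOn_Ioo_rpow_iff hε0).mpr (by linarith)
  have hEA : (∫ s in Ioc 0 ε, f s) ≤ CA * ε := by
    have step1 : (∫ s in Ioc 0 ε, f s) ≤ ∫ s in Ioc 0 ε, Kp * (ε/μ) ^ p * s ^ (-p) := by
      apply setIntegral_mono_on hf_intc (hrp_int.const_mul _) measurableSet_Ioc
      intro s hs
      have hs0 : 0 < s := hs.1
      have hFaub : Fa τ (ε / (μ * s)) ≤ (ε/μ) ^ p * s ^ (-p) * Kp := by
        have := Fa_le hτ2 hτ3 (hanonneg s hs0) hp0 hp1.le hp2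
        rw [hsr p s hs0] at this
        rw [← hKpd] at this
        linarith [this]
      rw [hf]
      dsimp only
      calc s⁻¹ * (1 - Real.exp (-s)) * Fa τ (ε / (μ * s))
          ≤ 1 * ((ε/μ) ^ p * s ^ (-p) * Kp) :=
            mul_le_mul (hfront s hs0).2 hFaub (Fa_nonneg τ _) zero_le_one
        _ = Kp * (ε/μ) ^ p * s ^ (-p) := by ring
    have hval : (∫ s in Ioc 0 ε, s ^ (-p)) = ε ^ (1-p) / (1-p) := by
      rw [← intervalIntegral.integral_of_le hε0.le,
        integral_rpow (Or.inl (by linarith : (-1:ℝ) < -p))]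
      rw [Real.zero_rpow (by linarith : -p + 1 ≠ 0), show (-p + 1 : ℝ) = 1 - p by ring]
      ring
    have hee : ε ^ p * ε ^ (1-p) = ε := by
      rw [← Real.rpow_add hε0]; norm_num
    have step2 : (∫ s in Ioc 0 ε, Kp * (ε/μ) ^ p * s ^ (-p)) = CA * ε := by
      rw [integral_const_mul, hval, Real.div_rpow hε0.le hμ.le, hCA]
      calc Kp * (ε ^ p / μ ^ p) * (ε ^ (1-p) / (1-p))
          = Kp * (μ ^ p)⁻¹ / (1-p) * (ε ^ p * ε ^ (1-p)) := by ring
        _ = Kp * (μ ^ p)⁻¹ / (1-p) * ε := by rw [hee]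
    linarith [step1, step2.symm.le, step2.le]
  have hEA0 : 0 ≤ ∫ s in Ioc 0 ε, f s :=
    setIntegral_nonneg measurableSet_Ioc fun s hs => hfnn s hs.1
  -- Estimate B : tail comparison with (ε J/μ) M
  set Mε : ℝ := ∫ s in Ioi ε, s ^ (-2:ℝ) * (1 - Real.exp (-s)) with hMd
  set g₀ : ℝ → ℝ := fun s => (ε * Jint τ / μ) * (s ^ (-2:ℝ) * (1 - Real.exp (-s))) with hg₀
  have hg0_int : IntegrableOn g₀ (Ioi ε) :=
    (integrable_tail (by norm_num) hε0).const_mul _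
  have hg0_val : (∫ s in Ioi ε, g₀ s) = (ε * Jint τ / μ) * Mε := integral_const_mul _ _
  have hg0eq : ∀ s : ℝ, 0 < s →
      g₀ s = (s⁻¹ * (1 - Real.exp (-s))) * (ε / (μ * s) * Jint τ) := by
    intro s hs
    have h2 : (s:ℝ) ^ (-2:ℝ) = s⁻¹ * s⁻¹ := by
      rw [show (-2:ℝ) = -1 + -1 by norm_num, Real.rpow_add hs, Real.rpow_neg_one]
    rw [hg₀]
    simp only
    rw [h2, div_mul_eq_div_div, div_eq_mul_inv (ε/μ), div_eq_mul_inv ε]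
    ring
  have hpt1 : ∀ s ∈ Ioi ε, f s ≤ g₀ s := by
    intro s hs
    have hs0 : 0 < s := hε0.trans hs
    rw [hg0eq s hs0, hf]
    simp only
    apply mul_le_mul_of_nonneg_left _ (hfront s hs0).1
    have hle := Fa_le hτ2 hτ3 (hanonneg s hs0) one_pos le_rfl (by linarith)
    rw [Real.rpow_one] at hle
    exact hle
  have hpt2 : ∀ s ∈ Ioi ε, g₀ s - f s ≤ Kq * (ε/μ) ^ q * (s ^ (-1-q) * (1 - Real.exp (-s))) := by
    intro s hs
    have hs0 : 0 < s := hε0.trans hs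
    have hlow := Fa_lower hτ2 hτ3 (hanonneg s hs0) hq1.le hq2
    rw [hsr q s hs0] at hlow
    rw [← hKqd] at hlow
    have heq : g₀ s - f s = (s⁻¹ * (1 - Real.exp (-s)))
        * (ε / (μ * s) * Jint τ - Fa τ (ε / (μ * s))) := by
      rw [hg0eq s hs0, hf]; ring
    rw [heq]
    have hmid : ε / (μ * s) * Jint τ - Fa τ (ε / (μ * s))
        ≤ (ε/μ) ^ q * s ^ (-q) * Kq := hlow
    calc (s⁻¹ * (1 - Real.exp (-s))) * (ε / (μ * s) * Jint τ - Fa τ (ε / (μ * s)))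
        ≤ (s⁻¹ * (1 - Real.exp (-s))) * ((ε/μ) ^ q * s ^ (-q) * Kq) :=
          mul_le_mul_of_nonneg_left hmid (hfront s hs0).1
      _ = Kq * (ε/μ) ^ q * ((s⁻¹ * s ^ (-q)) * (1 - Real.exp (-s))) := by ring
      _ = Kq * (ε/μ) ^ q * (s ^ (-1-q) * (1 - Real.exp (-s))) := by rw [hprod q s hs0]
  have hdiff_int : IntegrableOn (fun s => g₀ s - f s) (Ioi ε) := hg0_int.sub hf_int'
  have hdiff_val : (∫ s in Ioi ε, (g₀ s - f s))
      = (ε * Jint τ / μ) * Mε - ∫ s in Ioi ε, f s := by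
    rw [integral_sub hg0_int hf_int', hg0_val]
  have hD0 : 0 ≤ (ε * Jint τ / μ) * Mε - ∫ s in Ioi ε, f s := by
    rw [← hdiff_val]
    apply setIntegral_nonneg measurableSet_Ioi
    intro s hs
    have := hpt1 s hs
    linarith
  -- the tail integral T
  have hT_int : IntegrableOn (fun s : ℝ => s ^ (-1-q) * (1 - Real.exp (-s))) (Ioi ε) :=
    integrable_tail (by linarith) hε0
  have hT1 : (∫ s in Ioi ε, s ^ (-1-q) * (1 - Real.exp (-s)))
      ≤ ε ^ (1-q) / (q-1) + 1/q := by
    have hsplitT : (∫ s in Ioi ε, s ^ (-1-q) * (1 - Real.exp (-s)))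
        = (∫ s in Ioc ε 1, s ^ (-1-q) * (1 - Real.exp (-s)))
          + ∫ s in Ioi (1:ℝ), s ^ (-1-q) * (1 - Real.exp (-s)) := by
      rw [← setIntegral_union (Ioc_disjoint_Ioi le_rfl) measurableSet_Ioi
        (hT_int.mono_set Ioc_subset_Ioi_self)
        (hT_int.mono_set (Ioi_subset_Ioi hε1.le)), Ioc_union_Ioi_eq_Ioi hε1.le]
    have hq_int : IntegrableOn (fun s : ℝ => s ^ (-q)) (Ioc ε 1) := by
      apply Integrable.mono'
        (integrableOn_const measure_Ioc_lt_top.ne :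
          IntegrableOn (fun _ : ℝ => ε ^ (-q)) (Ioc ε 1) volume)
        (by fun_prop : Measurable fun s : ℝ => s ^ (-q)).aestronglyMeasurable
      filter_upwards [ae_restrict_mem measurableSet_Ioc] with s hs
      rw [Real.norm_eq_abs, abs_of_nonneg (Real.rpow_nonneg (hε0.trans hs.1).le _)]
      exact Real.rpow_le_rpow_of_nonpos hε0 hs.1.le (by linarith)
    have hIoc_le : (∫ s in Ioc ε 1, s ^ (-1-q) * (1 - Real.exp (-s)))
        ≤ ∫ s in Ioc ε 1, s ^ (-q) := by
      apply setIntegral_mono_on (hT_int.mono_set Ioc_subset_Ioi_self) hq_int measurableSet_Ioc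
      intro s hs
      have hs0 : 0 < s := hε0.trans hs.1
      calc s ^ (-1-q) * (1 - Real.exp (-s)) ≤ s ^ (-1-q) * s :=
        mul_le_mul_of_nonneg_left (eaux1 hs0.le) (Real.rpow_nonneg hs0.le _)
      _ = s ^ (-q) := by
        rw [← Real.rpow_add_one hs0.ne' (-1-q), show -1-q+1 = -q by ring]
    have hIoc_val : (∫ s in Ioc ε 1, s ^ (-q)) ≤ ε ^ (1-q) / (q-1) := by
      have h0 : (0:ℝ) ∉ uIcc ε 1 := by
        rw [Set.uIcc_of_le hε1.le]
        intro h
        exact absurd h.1 (by linarith)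
      have hqne : (-q:ℝ) ≠ -1 := by intro h; rw [neg_inj] at h; linarith
      rw [← intervalIntegral.integral_of_le hε1.le, integral_rpow (Or.inr ⟨hqne, h0⟩)]
      rw [Real.one_rpow, show (-q+1) = 1-q by ring]
      have hd : (1:ℝ) - q < 0 := by linarith
      have : (1 - ε ^ (1-q)) / (1-q) = (ε ^ (1-q) - 1) / (q-1) := by
        rw [show (1:ℝ)-q = -(q-1) by ring, div_neg, ← neg_div, neg_sub]
      rw [this]
      apply div_le_div_of_nonneg_right ?_ (by linarith)
      · linarith
    have hIoi_le : (∫ s in Ioi (1:ℝ), s ^ (-1-q) * (1 - Real.exp (-s))) ≤ 1/q := by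
      have hval : (∫ s in Ioi (1:ℝ), s ^ (-1-q:ℝ)) = 1/q := by
        rw [integral_Ioi_rpow_of_lt (by linarith) one_pos]
        rw [Real.one_rpow, show (-1-q+1) = -q by ring]
        field_simp
      rw [← hval]
      apply setIntegral_mono_on (integrable_tail (by linarith) one_pos)
        ((integrableOn_Ioi_rpow_iff one_pos).mpr (by linarith)) measurableSet_Ioi
      intro s hs
      have hs0 : (0:ℝ) < s := lt_trans one_pos hs
      calc s ^ (-1-q) * (1 - Real.exp (-s)) ≤ s ^ (-1-q) * 1 :=
        mul_le_mul_of_nonneg_left (eaux_le_one hs0.le) (Real.rpow_nonneg hs0.le _)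
      _ = s ^ (-1-q) := mul_one _
    rw [hsplitT]
    linarith
  have hEB : (ε * Jint τ / μ) * Mε - (∫ s in Ioi ε, f s) ≤ CB * ε := by
    have step1 : (∫ s in Ioi ε, (g₀ s - f s))
        ≤ Kq * (ε/μ) ^ q * ∫ s in Ioi ε, s ^ (-1-q) * (1 - Real.exp (-s)) := by
      rw [← integral_const_mul]
      exact setIntegral_mono_on hdiff_int (hT_int.const_mul _) measurableSet_Ioi hpt2
    have step2 : Kq * (ε/μ) ^ q * (∫ s in Ioi ε, s ^ (-1-q) * (1 - Real.exp (-s)))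
        ≤ Kq * (ε/μ) ^ q * (ε ^ (1-q) / (q-1) + 1/q) := by
      apply mul_le_mul_of_nonneg_left hT1 (by positivity)
    have hee : ε ^ q * ε ^ (1-q) = ε := by
      rw [← Real.rpow_add hε0]; norm_num
    have hεq : ε ^ q ≤ ε := by
      calc ε ^ q ≤ ε ^ (1:ℝ) := Real.rpow_le_rpow_of_exponent_ge hε0 hε1.le hq1.le
      _ = ε := Real.rpow_one ε
    have step3 : Kq * (ε/μ) ^ q * (ε ^ (1-q) / (q-1) + 1/q) ≤ CB * ε := by
      rw [Real.div_rpow hε0.le hμ.le, hCB]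
      calc Kq * (ε ^ q / μ ^ q) * (ε ^ (1-q) / (q-1) + 1/q)
          = Kq * (μ ^ q)⁻¹ * ((ε ^ q * ε ^ (1-q)) / (q-1) + ε ^ q / q) := by ring
        _ = Kq * (μ ^ q)⁻¹ * (ε / (q-1) + ε ^ q / q) := by rw [hee]
        _ ≤ Kq * (μ ^ q)⁻¹ * (ε / (q-1) + ε / q) := by
            apply mul_le_mul_of_nonneg_left _
              (mul_nonneg hKq (inv_nonneg.mpr (Real.rpow_nonneg hμ.le _)))
            have h1 : ε ^ q / q ≤ ε / q := div_le_div_of_nonneg_right hεq (by linarith)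
            linarith
        _ = Kq * (μ ^ q)⁻¹ * (1/(q-1) + 1/q) * ε := by ring
    rw [← hdiff_val]
    linarith
  -- M bounds
  have hMb := M_bounds hε0 hε1
  rw [← hMd] at hMb
  have hMb' := abs_le.mp hMb
  -- combine
  have hJμ : 0 ≤ ε * Jint τ / μ :=
    div_nonneg (mul_nonneg hε0.le (Jint_nonneg τ)) hμ.le
  have hE1 : (ε * Jint τ / μ) * (Mε - Real.log (1/ε)) ≤ (Jint τ / μ) * ε := by
    calc (ε * Jint τ / μ) * (Mε - Real.log (1/ε)) ≤ (ε * Jint τ / μ) * 1 :=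
        mul_le_mul_of_nonneg_left hMb'.2 hJμ
      _ = (Jint τ / μ) * ε := by ring
  have hE2 : -((Jint τ / μ) * ε) ≤ (ε * Jint τ / μ) * (Mε - Real.log (1/ε)) := by
    calc -((Jint τ / μ) * ε) = (ε * Jint τ / μ) * (-1) := by ring
      _ ≤ (ε * Jint τ / μ) * (Mε - Real.log (1/ε)) :=
        mul_le_mul_of_nonneg_left hMb'.1 hJμ
  have hexp : (CA + CB + Jint τ / μ + 1) * ε = CA * ε + CB * ε + (Jint τ / μ) * ε + ε := by
    ring
  rw [hGsplit]
  have hid : (∫ s in Ioc 0 ε, f s) + (∫ s in Ioi ε, f s) - ε * Jint τ / μ * Real.log (1/ε)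
      = (∫ s in Ioc 0 ε, f s)
        - ((ε * Jint τ / μ) * Mε - ∫ s in Ioi ε, f s)
        + (ε * Jint τ / μ) * (Mε - Real.log (1/ε)) := by ring
  rw [hid, abs_le, hexp]
  have hca := mul_nonneg hCA0 hε0.le
  have hcb := mul_nonneg hCB0 hε0.le
  constructor
  · linarith [hEA, hEB, hE1, hE2, hEA0, hD0]
  · linarith [hEA, hEB, hE1, hE2, hEA0, hD0]

lemma G_asymp {τ μ : ℝ} (hτ2 : 2 < τ) (hτ3 : τ < 3) (hμ : 0 < μ) :
    Tendsto (fun ε => Gfun τ μ ε / (ε * Real.log (1/ε))) (nhdsWithin 0 (Set.Ioi 0))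
      (nhds (Jint τ / μ)) := by
  obtain ⟨C, hC0, hb⟩ := G_bound hτ2 hτ3 hμ
  have hlog : Tendsto (fun ε : ℝ => Real.log (1/ε)) (nhdsWithin 0 (Set.Ioi 0)) atTop := by
    have h1 : Tendsto (fun ε : ℝ => ε⁻¹) (nhdsWithin (0:ℝ) (Set.Ioi 0)) atTop :=
      tendsto_inv_nhdsGT_zero
    have h2 := Real.tendsto_log_atTop.comp h1
    refine h2.congr fun ε => ?_
    simp [Function.comp, one_div]
  have hquot : Tendsto (fun ε : ℝ => C / Real.log (1/ε)) (nhdsWithin 0 (Set.Ioi 0)) (nhds 0) :=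
    tendsto_const_nhds.div_atTop hlog
  rw [tendsto_iff_dist_tendsto_zero]
  simp only [Real.dist_eq]
  apply tendsto_of_tendsto_of_tendsto_of_le_of_le' tendsto_const_nhds hquot
  · exact Eventually.of_forall fun ε => abs_nonneg _
  · filter_upwards [Ioo_mem_nhdsGT zero_lt_one] with ε hε
    obtain ⟨hε0, hε1⟩ := hε
    have h1ε : 1 < 1/ε := by rw [lt_div_iff₀ hε0]; linarith
    have hlogpos : 0 < Real.log (1/ε) := Real.log_pos h1ε
    have hd0 : 0 < ε * Real.log (1/ε) := mul_pos hε0 hlogpos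
    have hkey := hb ε ⟨hε0, hε1⟩
    have hiden : Gfun τ μ ε / (ε * Real.log (1/ε)) - Jint τ / μ
        = (Gfun τ μ ε - ε * Jint τ / μ * Real.log (1/ε)) / (ε * Real.log (1/ε)) := by
      field_simp
    rw [hiden, abs_div, abs_of_pos hd0, div_le_iff₀ hd0]
    have hfin : C / Real.log (1/ε) * (ε * Real.log (1/ε)) = C * ε := by
      field_simp
    rw [hfin]
    exact hkey

/-- Small-`B` asymptotics in the paper's proof of Theorem 3:
`I(B) / (2B² log(1/B)) → μ^{τ-2} ∫₀^∞ u^{1-τ}(1-e^{-u}) du` as `B → 0⁺`. -/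
theorem stmt_11 (τ μ : ℝ) (hτ2 : 2 < τ) (hτ3 : τ < 3) (hμ : 0 < μ) :
    Tendsto
      (fun B : ℝ =>
        (∫ t₂ in Set.Ioi (0 : ℝ), ∫ t₁ in Set.Ioi (0 : ℝ),
          (t₁ * t₂) ^ (-τ) * (1 - Real.exp (-(B * t₁))) * (1 - Real.exp (-(B * t₂)))
            * (1 - Real.exp (-(μ * t₁ * t₂))))
          / (2 * B ^ 2 * Real.log (1 / B)))
      (nhdsWithin 0 (Set.Ioi 0))
      (nhds (μ ^ (τ - 2) * ∫ u in Set.Ioi (0 : ℝ), u ^ (1 - τ) * (1 - Real.exp (-u)))) := by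
  have hG := G_asymp hτ2 hτ3 hμ
  have hsq : Tendsto (fun B : ℝ => B^2) (nhdsWithin (0:ℝ) (Set.Ioi 0))
      (nhdsWithin (0:ℝ) (Set.Ioi 0)) := by
    apply tendsto_nhdsWithin_of_tendsto_nhds_of_eventually_within
    · have h1 : Tendsto (fun B : ℝ => B^2) (nhds 0) (nhds ((0:ℝ)^2)) :=
        (continuous_pow 2).tendsto 0
      simpa using h1.mono_left nhdsWithin_le_nhds
    · filter_upwards [self_mem_nhdsWithin] with B hB
      exact pow_pos (show (0:ℝ) < B from hB) 2
  have hcomp := ((hG.comp hsq).const_mul (μ ^ (τ-1)))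
  have hconst : μ ^ (τ-1) * (Jint τ / μ) = μ ^ (τ-2) * Jint τ := by
    rw [show τ - 1 = (τ-2) + 1 by ring, Real.rpow_add hμ, Real.rpow_one]
    field_simp
  rw [hconst] at hcomp
  have heq : (fun B : ℝ => μ ^ (τ-1) *
      ((fun ε => Gfun τ μ ε / (ε * Real.log (1/ε))) ∘ (fun B : ℝ => B^2)) B)
      =ᶠ[nhdsWithin (0:ℝ) (Set.Ioi 0)]
      (fun B : ℝ =>
        (∫ t₂ in Set.Ioi (0 : ℝ), ∫ t₁ in Set.Ioi (0 : ℝ),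
          (t₁ * t₂) ^ (-τ) * (1 - Real.exp (-(B * t₁))) * (1 - Real.exp (-(B * t₂)))
            * (1 - Real.exp (-(μ * t₁ * t₂))))
          / (2 * B ^ 2 * Real.log (1 / B))) := by
    filter_upwards [self_mem_nhdsWithin] with B hB0
    have hB0' : (0:ℝ) < B := hB0
    simp only [Function.comp]
    rw [outer_eval hμ hB0']
    have hlog2 : Real.log (1/B^2) = 2 * Real.log (1/B) := by
      rw [one_div, one_div, Real.log_inv, Real.log_inv, Real.log_pow]
      push_cast
      ring
    rw [hlog2]
    ring
  exact Tendsto.congr' heq hcomp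
end

section
/- Let τ be a real number and let 0 < ε < 1. Then ∫₁^{1/ε²} ∫_{ε/x}^{ε} (x y)^{1−τ} (1 − e^{−x y}) dy dx = log(1/ε) ∫_ε^{1/ε} u^{1−τ}(1 − e^{−u}) du + ∫_ε^{1/ε} log(1/u) · u^{1−τ}(1 − e^{−u}) du. -/
open MeasureTheory intervalIntegral Set Real
open scoped Interval

/-! With `u = x y` the inner integral is `x⁻¹ ∫_ε^{εx} f`, and the substitution `t = εx` keeps
the measure `dx / x` invariant, so the double integral becomes `∫_ε^{εT} F(t) dt / t` for the
primitive `F` of `f` vanishing at `ε`. Integrating by parts against `log (t / (εT))` turns this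
into `∫_ε^{εT} log (εT / u) f(u) du`; for `T = ε⁻²` the weight is `log (1/ε) + log (1/u)`. -/

theorem integral_primitive_mul_inv_eq_integral_log_mul {f : ℝ → ℝ} {a b : ℝ} (ha : 0 < a)
    (hb : 0 < b) (hf : ContinuousOn f [[a, b]]) :
    ∫ t in a..b, (∫ u in a..t, f u) * t⁻¹ = ∫ u in a..b, log (b / u) * f u := by
  have hpos : ∀ t ∈ [[a, b]], 0 < t := fun t ht => lt_of_lt_of_le (lt_min ha hb) ht.1
  have hprimitive :
      ∀ t ∈ Ioo (min a b) (max a b), HasDerivAt (fun s => ∫ u in a..s, f u) (f t) t :=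
    fun t ht => integral_hasDerivAt_right
      (hf.mono (uIcc_subset_uIcc_left (Ioo_subset_Icc_self ht))).intervalIntegrable
      ((hf.mono Ioo_subset_Icc_self).stronglyMeasurableAtFilter isOpen_Ioo t ht)
      (hf.continuousAt (Icc_mem_nhds ht.1 ht.2))
  have hlog : ∀ t ∈ Ioo (min a b) (max a b), HasDerivAt (fun s => log (s / b)) t⁻¹ t := by
    intro t ht
    have ht0 : t ≠ 0 := (hpos t (Ioo_subset_Icc_self ht)).ne'
    convert ((hasDerivAt_id' t).div_const b).log (div_ne_zero ht0 hb.ne') using 1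
    field_simp
  have hinv : ContinuousOn (·⁻¹) [[a, b]] :=
    continuousOn_inv₀.mono fun t ht => (hpos t ht).ne'
  rw [integral_mul_deriv_eq_deriv_mul_of_hasDerivAt
    (continuousOn_primitive_interval hf.integrableOn_uIcc)
    ((continuous_id'.div_const b).continuousOn.log fun t ht => (div_pos (hpos t ht) hb).ne')
    hprimitive hlog hf.intervalIntegrable hinv.intervalIntegrable]
  simp only [integral_same, div_self hb.ne', log_one, mul_zero, sub_zero, zero_mul, zero_sub]
  rw [← intervalIntegral.integral_neg]
  congr 1 with u
  rw [← inv_div, log_inv]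
  ring

theorem integral_comp_mul_left_mul_inv (g : ℝ → ℝ) {c : ℝ} (hc : c ≠ 0) (a b : ℝ) :
    ∫ x in a..b, g (c * x) * x⁻¹ = ∫ t in c * a..c * b, g t * t⁻¹ := by
  have hscale : ∀ x, g (c * x) * x⁻¹ = c * (g (c * x) * (c * x)⁻¹) := fun x => by
    rw [mul_inv, mul_left_comm c, mul_inv_cancel_left₀ hc]
  simp_rw [hscale, intervalIntegral.integral_const_mul]
  exact smul_integral_comp_mul_left (fun t => g t * t⁻¹) c

theorem integral_integral_comp_mul_eq_integral_log_mul {f : ℝ → ℝ} {ε T : ℝ} (hε : 0 < ε)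
    (hT : 0 < T) (hf : ContinuousOn f [[ε, ε * T]]) :
    ∫ x in (1 : ℝ)..T, ∫ y in ε / x..ε, f (x * y) = ∫ u in ε..ε * T, log (ε * T / u) * f u := by
  calc ∫ x in (1 : ℝ)..T, ∫ y in ε / x..ε, f (x * y)
      _ = ∫ x in (1 : ℝ)..T, (∫ u in ε..ε * x, f u) * x⁻¹ := by
        refine integral_congr fun x hx => ?_
        have hx : x ≠ 0 := (lt_of_lt_of_le (lt_min one_pos hT) hx.1).ne'
        simp only [integral_comp_mul_left _ hx, mul_div_cancel₀ _ hx, smul_eq_mul, mul_comm x ε,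
          mul_comm x⁻¹]
      _ = ∫ t in ε..ε * T, (∫ u in ε..t, f u) * t⁻¹ := by
        simpa using integral_comp_mul_left_mul_inv (fun t => ∫ u in ε..t, f u) hε.ne' 1 T
      _ = ∫ u in ε..ε * T, log (ε * T / u) * f u :=
        integral_primitive_mul_inv_eq_integral_log_mul hε (mul_pos hε hT) hf

theorem stmt_12_general (τ ε : ℝ) (hε0 : 0 < ε) :
    (∫ x in (1 : ℝ)..(1 / ε ^ 2), ∫ y in (ε / x)..ε,
        (x * y) ^ (1 - τ) * (1 - Real.exp (-(x * y))))
    = Real.log (1 / ε) * (∫ u in ε..(1 / ε), u ^ (1 - τ) * (1 - Real.exp (-u)))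
      + ∫ u in ε..(1 / ε), Real.log (1 / u) * (u ^ (1 - τ) * (1 - Real.exp (-u))) := by
  set f : ℝ → ℝ := fun u => u ^ (1 - τ) * (1 - exp (-u))
  have hεT : ε * (1 / ε ^ 2) = 1 / ε := by field_simp
  have hpos : [[ε, 1 / ε]] ⊆ Ioi 0 := fun u hu => lt_of_lt_of_le (lt_min hε0 (by positivity)) hu.1
  have hf : ContinuousOn f [[ε, 1 / ε]] :=
    (continuousOn_id.rpow_const fun u hu => Or.inl (hpos hu).ne').mul (by fun_prop)
  have hlog : ContinuousOn (fun u => log (1 / u)) [[ε, 1 / ε]] :=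
    (continuousOn_const.div continuousOn_id fun u hu => (hpos hu).ne').log
      fun u hu => (one_div_pos.2 (hpos hu)).ne'
  have hsplit :
      ∀ u ∈ [[ε, 1 / ε]], log (1 / ε / u) * f u = log (1 / ε) * f u + log (1 / u) * f u :=
    fun u hu => by
      rw [div_eq_mul_one_div (1 / ε) u, log_mul (by positivity) (one_div_ne_zero (hpos hu).ne'),
        add_mul]
  rw [integral_integral_comp_mul_eq_integral_log_mul (f := f) hε0 (by positivity) (hεT ▸ hf), hεT,
    integral_congr hsplit, intervalIntegral.integral_add (hf.intervalIntegrable.const_mul _)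
      (hf.intervalIntegrable.continuousOn_mul hlog),
    intervalIntegral.integral_const_mul]

/-- Substitution identity (`u = xy`) from the paper's Lemma 4.7 (Range II). -/
theorem stmt_12 (τ ε : ℝ) (hε0 : 0 < ε) (hε1 : ε < 1) :
    (∫ x in (1 : ℝ)..(1 / ε ^ 2), ∫ y in (ε / x)..ε,
        (x * y) ^ (1 - τ) * (1 - Real.exp (-(x * y))))
    = Real.log (1 / ε) * (∫ u in ε..(1 / ε), u ^ (1 - τ) * (1 - Real.exp (-u)))
      + ∫ u in ε..(1 / ε), Real.log (1 / u) * (u ^ (1 - τ) * (1 - Real.exp (-u))) :=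
  stmt_12_general τ ε hε0
end

section
/- Let τ be a real number and let 0 < B < 1. Then ∫_{B²}^{1} ∫_{B/x}^{1/B} (x y)^{1−τ} (1 − e^{−x y}) dy dx + ∫_{1}^{1/B} ∫_{B/x}^{1/(B x)} (x y)^{1−τ} (1 − e^{−x y}) dy dx = 2 log(1/B) ∫_B^{1/B} u^{1−τ}(1 − e^{−u}) du + ∫_B^{1/B} log(1/u) · u^{1−τ}(1 − e^{−u}) du. -/
open MeasureTheory intervalIntegral Set
open scoped Interval

/-!
Substituting `u = x y` in the inner integrals turns the left side into
`∫_{B²}^1 x⁻¹ F(x/B) dx + log(1/B) F(1/B)` with `F t = ∫_B^t f`; rescaling `x = B u` and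
integrating by parts against `log` turns the first term into `∫_B^{1/B} log((1/B)/u) f(u) du`.
-/

theorem pos_of_mem_uIcc {a b x : ℝ} (ha : 0 < a) (hb : 0 < b) (hx : x ∈ [[a, b]]) : 0 < x :=
  (lt_min ha hb).trans_le hx.1

theorem integral_comp_mul_left_div (f : ℝ → ℝ) (a b : ℝ) {x : ℝ} (hx : x ≠ 0) :
    ∫ y in a / x..b / x, f (x * y) = x⁻¹ * ∫ u in a..b, f u := by
  rw [integral_comp_mul_left f hx, mul_div_cancel₀ _ hx, mul_div_cancel₀ _ hx, smul_eq_mul]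

theorem integral_inv_mul_comp_div (g : ℝ → ℝ) (a b : ℝ) {c : ℝ} (hc : c ≠ 0) :
    ∫ x in c * a..c * b, x⁻¹ * g (x / c) = ∫ u in a..b, u⁻¹ * g u := by
  have hg : ∀ x, x⁻¹ * g (x / c) = c⁻¹ * ((x / c)⁻¹ * g (x / c)) := fun x => by
    rw [inv_div, ← mul_assoc, div_eq_mul_inv c x, inv_mul_cancel_left₀ hc]
  simp_rw [hg]
  rw [intervalIntegral.integral_const_mul, integral_comp_div (fun u => u⁻¹ * g u) hc,
    mul_div_cancel_left₀ _ hc, mul_div_cancel_left₀ _ hc, smul_eq_mul, inv_mul_cancel_left₀ hc]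

theorem integral_inv_mul_primitive {f : ℝ → ℝ} {a b : ℝ} (ha : 0 < a) (hb : 0 < b)
    (hf : ContinuousOn f [[a, b]]) :
    ∫ u in a..b, u⁻¹ * ∫ v in a..u, f v = ∫ u in a..b, Real.log (b / u) * f u := by
  have hne : ∀ u ∈ [[a, b]], u ≠ 0 := fun u hu => (pos_of_mem_uIcc ha hb hu).ne'
  have hF : ∀ u ∈ Ioo (min a b) (max a b), HasDerivAt (fun t => ∫ v in a..t, f v) (f u) u := by
    intro u hu
    have hcont : ContinuousOn f (Ioo (min a b) (max a b)) := hf.mono Ioo_subset_Icc_self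
    exact integral_hasDerivAt_right
      ((hf.mono (uIcc_subset_uIcc_left (Ioo_subset_Icc_self hu))).intervalIntegrable)
      (hcont.stronglyMeasurableAtFilter isOpen_Ioo u hu)
      (hcont.continuousAt (isOpen_Ioo.mem_nhds hu))
  have hlog : ∀ u ∈ Ioo (min a b) (max a b), HasDerivAt Real.log u⁻¹ u := fun u hu =>
    Real.hasDerivAt_log (hne u (Ioo_subset_Icc_self hu))
  have hibp := integral_mul_deriv_eq_deriv_mul_of_hasDerivAt
    (continuousOn_primitive_interval' hf.intervalIntegrable left_mem_uIcc)
    (Real.continuousOn_log.mono hne) hF hlog hf.intervalIntegrable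
    (continuousOn_inv₀.mono hne).intervalIntegrable
  have hlogf : ContinuousOn (fun u => Real.log u * f u) [[a, b]] :=
    (Real.continuousOn_log.mono hne).mul hf
  calc ∫ u in a..b, u⁻¹ * ∫ v in a..u, f v
      = Real.log b * (∫ v in a..b, f v) - ∫ u in a..b, Real.log u * f u := by
        simp_rw [mul_comm _⁻¹, hibp, integral_same, zero_mul, sub_zero, mul_comm (f _)]
        ring
    _ = ∫ u in a..b, (Real.log b * f u - Real.log u * f u) := by
        rw [integral_sub (hf.intervalIntegrable.const_mul _) hlogf.intervalIntegrable,
          intervalIntegral.integral_const_mul]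
    _ = ∫ u in a..b, Real.log (b / u) * f u := by
        refine integral_congr fun u hu => ?_
        rw [Real.log_div hb.ne' (hne u hu), sub_mul]

theorem integral_comp_mul_hyperbolic_regions {f : ℝ → ℝ} {B : ℝ} (hB : 0 < B)
    (hf : ContinuousOn f [[B, 1 / B]]) :
    (∫ x in B ^ 2..1, ∫ y in B / x..1 / B, f (x * y))
      + (∫ x in 1..1 / B, ∫ y in B / x..1 / (B * x), f (x * y))
      = 2 * Real.log (1 / B) * (∫ u in B..1 / B, f u)
        + ∫ u in B..1 / B, Real.log (1 / u) * f u := by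
  have hB' : 0 < 1 / B := one_div_pos.mpr hB
  have hne : ∀ u ∈ [[B, 1 / B]], u ≠ 0 := fun u hu => (pos_of_mem_uIcc hB hB' hu).ne'
  have lower : ∫ x in B ^ 2..1, ∫ y in B / x..1 / B, f (x * y)
      = ∫ u in B..1 / B, (Real.log (1 / B) * f u + Real.log (1 / u) * f u) := by
    calc ∫ x in B ^ 2..1, ∫ y in B / x..1 / B, f (x * y)
        = ∫ x in B * B..B * (1 / B), x⁻¹ * ∫ u in B..x / B, f u := by
          rw [← sq, mul_one_div_cancel hB.ne']
          refine integral_congr fun x hx => ?_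
          have hx0 := (pos_of_mem_uIcc (pow_pos hB 2) one_pos hx).ne'
          rw [← integral_comp_mul_left_div f _ _ hx0, div_div_cancel_left' hx0, one_div]
      _ = ∫ u in B..1 / B, Real.log ((1 / B) / u) * f u := by
          rw [integral_inv_mul_comp_div (fun t => ∫ u in B..t, f u) _ _ hB.ne', integral_inv_mul_primitive hB hB' hf]
      _ = _ := integral_congr fun u hu => by
          rw [div_eq_mul_one_div (1 / B), Real.log_mul (one_div_ne_zero hB.ne')
            (one_div_ne_zero (hne u hu)), add_mul]
  have upper : ∫ x in 1..1 / B, ∫ y in B / x..1 / (B * x), f (x * y)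
      = Real.log (1 / B) * ∫ u in B..1 / B, f u := by
    calc ∫ x in 1..1 / B, ∫ y in B / x..1 / (B * x), f (x * y)
        = ∫ x in 1..1 / B, x⁻¹ * ∫ u in B..1 / B, f u := by
          refine integral_congr fun x hx => ?_
          have hx0 := (pos_of_mem_uIcc one_pos hB' hx).ne'
          rw [← integral_comp_mul_left_div f _ _ hx0, div_div]
      _ = _ := by rw [intervalIntegral.integral_mul_const, integral_inv_of_pos one_pos hB', div_one]
  have hlogf : ContinuousOn (fun u => Real.log (1 / u) * f u) [[B, 1 / B]] :=
    ((Real.continuousOn_log.comp (continuousOn_const.div continuousOn_id hne)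
      fun u hu => one_div_ne_zero (hne u hu)).mul hf)
  rw [lower, upper, integral_add (hf.intervalIntegrable.const_mul _) hlogf.intervalIntegrable,
    intervalIntegral.integral_const_mul]
  ring

theorem stmt_13_general (τ B : ℝ) (hB0 : 0 < B) :
    (∫ x in (B ^ 2 : ℝ)..(1 : ℝ), ∫ y in (B / x)..(1 / B),
        (x * y) ^ (1 - τ) * (1 - Real.exp (-(x * y))))
    + (∫ x in (1 : ℝ)..(1 / B), ∫ y in (B / x)..(1 / (B * x)),
        (x * y) ^ (1 - τ) * (1 - Real.exp (-(x * y))))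
    = 2 * Real.log (1 / B) * (∫ u in B..(1 / B), u ^ (1 - τ) * (1 - Real.exp (-u)))
      + ∫ u in B..(1 / B), Real.log (1 / u) * (u ^ (1 - τ) * (1 - Real.exp (-u))) := by
  have hf : ContinuousOn (fun u : ℝ => u ^ (1 - τ) * (1 - Real.exp (-u))) [[B, 1 / B]] :=
    ContinuousOn.mul (fun u hu => (Real.continuousAt_rpow_const _ _
      (Or.inl (pos_of_mem_uIcc hB0 (one_div_pos.mpr hB0) hu).ne')).continuousWithinAt)
      (by fun_prop)
  exact integral_comp_mul_hyperbolic_regions hB0 hf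

/-- Change-of-variables identity (`u = xy`) from the paper's proof of Theorem 3
(small-`B` regime). -/
theorem stmt_13 (τ B : ℝ) (hB0 : 0 < B) (hB1 : B < 1) :
    (∫ x in (B ^ 2 : ℝ)..(1 : ℝ), ∫ y in (B / x)..(1 / B),
        (x * y) ^ (1 - τ) * (1 - Real.exp (-(x * y))))
    + (∫ x in (1 : ℝ)..(1 / B), ∫ y in (B / x)..(1 / (B * x)),
        (x * y) ^ (1 - τ) * (1 - Real.exp (-(x * y))))
    = 2 * Real.log (1 / B) * (∫ u in B..(1 / B), u ^ (1 - τ) * (1 - Real.exp (-u)))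
      + ∫ u in B..(1 / B), Real.log (1 / u) * (u ^ (1 - τ) * (1 - Real.exp (-u))) :=
  stmt_13_general τ B hB0
end

section
/- There exists a real number L such that lim_{ε → 0⁺} ( ∫_ε^{1/ε} t^{−2} (1 − e^{−t}) dt − log(1/ε) ) = L. -/
/-!
Subtract from the integrand `t⁻²(1 - e⁻ᵗ)` the rational function `1 / (t(1 + t))`, whose
integral over `[ε, 1/ε]` is exactly `log(1/ε)`. The remainder `(1 - (1 + t)e⁻ᵗ) / (t²(1 + t))`
lies between `0` and `2 / (1 + t²)` on `(0, ∞)` (its numerator is at most `min(1, t²)`), so it is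
integrable there, and the integrals over `[ε, 1/ε]` converge to its integral over `(0, ∞)`.
-/

open MeasureTheory Filter Set Real Topology

theorem tendsto_intervalIntegral_of_integrableOn_Ioi {ι E : Type*} [NormedAddCommGroup E]
    [NormedSpace ℝ E] {l : Filter ι} [l.IsCountablyGenerated] {f : ℝ → E} {A : ℝ}
    {a b : ι → ℝ} (hf : IntegrableOn f (Ioi A)) (ha : Tendsto a l (𝓝[≥] A))
    (hb : Tendsto b l atTop) :
    Tendsto (fun i => ∫ x in a i..b i, f x) l (𝓝 (∫ x in Ioi A, f x)) := by
  obtain ⟨ha_nhds, hA_le⟩ := tendsto_nhdsWithin_iff.1 ha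
  have hcover : AECover (volume.restrict (Ioi A)) l fun i => Ioc (a i) (b i) :=
    (aecover_Ioi_of_Ioi ha_nhds).inter ((aecover_Iic hb).mono Measure.restrict_le_self)
  refine (hcover.integral_tendsto_of_countably_generated hf).congr' ?_
  filter_upwards [hA_le, hb.eventually (eventually_ge_atTop (A + 1)),
    ha_nhds.eventually (eventually_le_nhds (lt_add_one A))] with i hAa hb_ge ha_le
  rw [Measure.restrict_restrict measurableSet_Ioc,
    inter_eq_left.2 ((Ioc_subset_Ioc_left hAa).trans Ioc_subset_Ioi_self),
    intervalIntegral.integral_of_le (ha_le.trans hb_ge)]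

theorem integral_inv_mul_one_add {a b : ℝ} (ha : 0 < a) (hb : 0 < b) :
    ∫ t in a..b, (t * (1 + t))⁻¹ = log (b * (1 + a) / (a * (1 + b))) := by
  have hpos : ∀ t ∈ uIcc a b, 0 < t := fun t ht => (lt_min ha hb).trans_le ht.1
  have hderiv : ∀ t ∈ uIcc a b,
      HasDerivAt (fun t => log t - log (1 + t)) (t * (1 + t))⁻¹ t := by
    intro t ht
    have ht0 := hpos t ht
    rw [show (t * (1 + t))⁻¹ = t⁻¹ - 1 / (1 + t) by field_simp; ring]
    exact (hasDerivAt_log ht0.ne').sub (((hasDerivAt_id' t).const_add 1).log (by positivity))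
  have hcont : ContinuousOn (fun t : ℝ => (t * (1 + t))⁻¹) (uIcc a b) :=
    ContinuousOn.inv₀ (by fun_prop) fun t ht => by have := hpos t ht; positivity
  rw [intervalIntegral.integral_eq_sub_of_hasDerivAt hderiv hcont.intervalIntegrable,
    log_div (by positivity) (by positivity), log_mul ha.ne' (by positivity),
    log_mul hb.ne' (by positivity)]
  ring

theorem integral_inv_mul_one_add_of_inv {ε : ℝ} (hε : 0 < ε) :
    ∫ t in ε..1 / ε, (t * (1 + t))⁻¹ = log (1 / ε) := by
  rw [integral_inv_mul_one_add hε (by positivity)]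
  congr 1
  field_simp
  ring

theorem one_add_mul_exp_neg_le_one (t : ℝ) : (1 + t) * exp (-t) ≤ 1 :=
  calc (1 + t) * exp (-t) ≤ exp t * exp (-t) := by gcongr; linarith [add_one_le_exp t]
    _ = 1 := by rw [← exp_add, add_neg_cancel, exp_zero]

theorem one_sub_sq_le_one_add_mul_exp_neg {t : ℝ} (ht : -1 ≤ t) :
    1 - t ^ 2 ≤ (1 + t) * exp (-t) :=
  calc 1 - t ^ 2 = (1 + t) * (-t + 1) := by ring
    _ ≤ (1 + t) * exp (-t) := by
      gcongr
      · linarith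
      · exact add_one_le_exp (-t)

noncomputable def compensatedIntegrand (t : ℝ) : ℝ :=
  (1 - (1 + t) * exp (-t)) / (t ^ 2 * (1 + t))

theorem zpow_neg_two_mul_one_sub_exp_neg {t : ℝ} (ht : 0 < t) :
    t ^ (-2 : ℤ) * (1 - exp (-t)) = compensatedIntegrand t + (t * (1 + t))⁻¹ := by
  rw [compensatedIntegrand, zpow_neg, zpow_ofNat]
  field_simp
  ring

theorem compensatedIntegrand_nonneg {t : ℝ} (ht : 0 ≤ t) : 0 ≤ compensatedIntegrand t :=
  div_nonneg (sub_nonneg.2 (one_add_mul_exp_neg_le_one t)) (by positivity)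

theorem compensatedIntegrand_le {t : ℝ} (ht : 0 ≤ t) :
    compensatedIntegrand t ≤ 2 / (1 + t ^ 2) := by
  rcases ht.eq_or_lt with rfl | ht
  · norm_num [compensatedIntegrand]
  rw [compensatedIntegrand, div_le_div_iff₀ (by positivity) (by positivity)]
  have h_le_one := one_add_mul_exp_neg_le_one t
  have h_le_sq := one_sub_sq_le_one_add_mul_exp_neg (by linarith : -1 ≤ t)
  have h_nonneg : 0 ≤ (1 + t) * exp (-t) := by positivity
  nlinarith [sq_nonneg t, mul_pos ht (sq_pos_of_pos ht)]

theorem integrableOn_compensatedIntegrand : IntegrableOn compensatedIntegrand (Ioi 0) := by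
  have hmeas : Measurable compensatedIntegrand := by unfold compensatedIntegrand; fun_prop
  refine (integrable_inv_one_add_sq.const_mul 2).integrableOn.mono' hmeas.aestronglyMeasurable ?_
  filter_upwards [ae_restrict_mem measurableSet_Ioi] with t ht
  rw [norm_of_nonneg (compensatedIntegrand_nonneg ht.le), ← div_eq_mul_inv]
  exact compensatedIntegrand_le ht.le

theorem continuousOn_compensatedIntegrand : ContinuousOn compensatedIntegrand (Ioi 0) :=
  ContinuousOn.div (by fun_prop) (by fun_prop) fun t (ht : 0 < t) => by positivity

theorem integral_zpow_neg_two_mul_one_sub_exp_neg_sub_log {ε : ℝ} (hε : 0 < ε) :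
    (∫ t in ε..1 / ε, t ^ (-2 : ℤ) * (1 - exp (-t))) - log (1 / ε) =
      ∫ t in ε..1 / ε, compensatedIntegrand t := by
  have hsub : uIcc ε (1 / ε) ⊆ Ioi 0 := fun t ht =>
    (lt_min hε (by positivity : 0 < 1 / ε)).trans_le ht.1
  have hrational : ContinuousOn (fun t : ℝ => (t * (1 + t))⁻¹) (Ioi 0) :=
    ContinuousOn.inv₀ (by fun_prop) fun t (ht : 0 < t) => by positivity
  rw [intervalIntegral.integral_congr fun t ht => zpow_neg_two_mul_one_sub_exp_neg (hsub ht),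
    intervalIntegral.integral_add
      ((continuousOn_compensatedIntegrand.mono hsub).intervalIntegrable)
      ((hrational.mono hsub).intervalIntegrable),
    integral_inv_mul_one_add_of_inv hε, add_sub_cancel_right]

/-- The quantity `∫_ε^{1/ε} t^{-2}(1-e^{-t}) dt - log(1/ε)` converges to a finite
limit as `ε → 0⁺` (paper's Lemma 4.7). -/
theorem stmt_14 :
    ∃ L : ℝ, Tendsto
      (fun ε : ℝ =>
        (∫ t in ε..(1 / ε), t ^ (-2 : ℤ) * (1 - Real.exp (-t))) - Real.log (1 / ε))
      (nhdsWithin 0 (Set.Ioi 0)) (nhds L) := by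
  refine ⟨∫ t in Ioi 0, compensatedIntegrand t, ?_⟩
  have hlim := tendsto_intervalIntegral_of_integrableOn_Ioi integrableOn_compensatedIntegrand
    (tendsto_id.mono_right (nhdsWithin_mono 0 Ioi_subset_Ici_self))
    (tendsto_inv_nhdsGT_zero.congr fun ε => (one_div ε).symm)
  refine hlim.congr' ?_
  filter_upwards [self_mem_nhdsWithin] with ε hε
  exact (integral_zpow_neg_two_mul_one_sub_exp_neg_sub_log hε).symm
end

section
/- Let τ be a real number with 2 < τ < 3, let 0 < ε ≤ 1, and let n ≥ 1 be a real number with εn ≥ 1. Then ∫₁^{εn} x^{2−τ} ( ∫₁^{εn/x} y^{2−τ} dy ) dx ≤ (εn)^{3−τ} · log(n) / (3 − τ). -/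
open MeasureTheory intervalIntegral

/-! The inner integral is explicit, `x ^ r * ∫ y in 1..c/x, y ^ r = (c ^ (r+1) / x - x ^ r) / (r+1)`,
so the double integral equals `(c ^ (r+1) * log c - (c ^ (r+1) - 1) / (r+1)) / (r+1)`. Dropping the
subtracted term, which is nonnegative for `c ≥ 1`, and using `log (ε n) ≤ log n` gives the bound. -/

namespace Real

theorem rpow_mul_div_rpow_add_one {x c : ℝ} (r : ℝ) (hx : 0 < x) (hc : 0 ≤ c) :
    x ^ r * (c / x) ^ (r + 1) = c ^ (r + 1) * x⁻¹ := by
  rw [div_rpow hc hx.le, mul_div_left_comm, ← rpow_sub hx, sub_add_cancel_left, rpow_neg_one]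

theorem integral_rpow_mul_integral_rpow {r c : ℝ} (hr : -1 < r) (hc : 0 < c) :
    (∫ x in (1 : ℝ)..c, x ^ r * ∫ y in (1 : ℝ)..(c / x), y ^ r)
      = (c ^ (r + 1) * log c - (c ^ (r + 1) - 1) / (r + 1)) / (r + 1) := by
  have pos_of_mem {x : ℝ} (hx : x ∈ Set.uIcc 1 c) : 0 < x := by
    rcases Set.mem_uIcc.1 hx with h | h <;> linarith [h.1]
  have inner {x : ℝ} (hx : x ∈ Set.uIcc 1 c) :
      x ^ r * ∫ y in (1 : ℝ)..(c / x), y ^ r = (c ^ (r + 1) * x⁻¹ - x ^ r) / (r + 1) := by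
    rw [integral_rpow (Or.inl hr), one_rpow, mul_div_assoc', mul_sub, mul_one,
      rpow_mul_div_rpow_add_one r (pos_of_mem hx) hc.le]
  have hinv : IntervalIntegrable (fun x : ℝ ↦ c ^ (r + 1) * x⁻¹) volume 1 c :=
    (intervalIntegrable_inv (fun x hx ↦ (pos_of_mem hx).ne') continuousOn_id).const_mul _
  rw [integral_congr fun x hx ↦ inner hx, intervalIntegral.integral_div,
    integral_sub hinv (intervalIntegrable_rpow' hr), intervalIntegral.integral_const_mul,
    integral_inv_of_pos one_pos hc, div_one, integral_rpow (Or.inl hr), one_rpow]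

theorem integral_rpow_mul_integral_rpow_le {r c : ℝ} (hr : -1 < r) (hc : 1 ≤ c) :
    (∫ x in (1 : ℝ)..c, x ^ r * ∫ y in (1 : ℝ)..(c / x), y ^ r)
      ≤ c ^ (r + 1) * log c / (r + 1) := by
  have hr1 : 0 < r + 1 := by linarith
  rw [integral_rpow_mul_integral_rpow hr (by linarith)]
  have : 1 ≤ c ^ (r + 1) := one_le_rpow hc hr1.le
  gcongr
  exact sub_le_self _ (div_nonneg (by linarith) hr1.le)

end Real

theorem stmt_18_general (τ ε n : ℝ) (hτ3 : τ < 3) (hε1 : ε ≤ 1) (hn : 1 ≤ n) (hεn : 1 ≤ ε * n) :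
    (∫ x in (1 : ℝ)..(ε * n), x ^ (2 - τ) * ∫ y in (1 : ℝ)..(ε * n / x), y ^ (2 - τ))
      ≤ (ε * n) ^ (3 - τ) * Real.log n / (3 - τ) := by
  have hexp : 2 - τ + 1 = 3 - τ := by ring
  calc _ ≤ (ε * n) ^ (3 - τ) * Real.log (ε * n) / (3 - τ) := by
        simpa only [hexp] using
          Real.integral_rpow_mul_integral_rpow_le (r := 2 - τ) (by linarith) hεn
    _ ≤ (ε * n) ^ (3 - τ) * Real.log n / (3 - τ) := by
        have : ε * n ≤ n := mul_le_of_le_one_left (by linarith) hε1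
        gcongr

/-- Explicit bound from the paper's Lemma 6.1 (minor contributions, Range I):
contribution of pairs with degree product below `εn`. -/
theorem stmt_18 (τ ε n : ℝ) (hτ2 : 2 < τ) (hτ3 : τ < 3) (hε0 : 0 < ε)
    (hε1 : ε ≤ 1) (hn : 1 ≤ n) (hεn : 1 ≤ ε * n) :
    (∫ x in (1 : ℝ)..(ε * n), x ^ (2 - τ) * ∫ y in (1 : ℝ)..(ε * n / x), y ^ (2 - τ))
      ≤ (ε * n) ^ (3 - τ) * Real.log n / (3 - τ) :=
  stmt_18_general τ ε n hτ3 hε1 hn hεn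
end

section
/- Let τ be a real number with 2 < τ < 3, let 0 < ε ≤ 1, and let n ≥ 1 be a real number. Then ∫₁^{n} x^{1−τ} ( ∫_{n/(εx)}^{n} y^{1−τ} dy ) dx ≤ ε^{τ−2} · n^{2−τ} · log(n) / (τ − 2). -/
/-!
Since `τ > 2`, the inner integral is at most `(n/(εx))^(2-τ)/(τ-2)`, the tail integral from its
lower limit to `∞` (also when `n/(εx) > n`, where the signed integral is negative). As
`x^(1-τ) (n/(εx))^(2-τ) = (n/ε)^(2-τ) / x`, integrating over `[1, n]` produces the `log n`.
-/

open MeasureTheory intervalIntegral Real Set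

theorem continuousOn_integral_left_of_continuousOn_Ioi {f : ℝ → ℝ} {c b : ℝ}
    (hf : ContinuousOn f (Ioi c)) (hb : c < b) :
    ContinuousOn (fun a => ∫ y in a..b, f y) (Ioi c) := by
  intro a (ha : c < a)
  obtain ⟨lo, hclo, hlo⟩ : ∃ lo, c < lo ∧ lo < min a b := exists_between (lt_min ha hb)
  obtain ⟨hi, hhi⟩ : ∃ hi, max a b < hi := exists_gt _
  have hlohi : uIcc lo hi = Icc lo hi :=
    uIcc_of_le (by linarith [min_le_left a b, le_max_left a b])
  have hprim : ContinuousOn (fun x => ∫ y in b..x, f y) (Icc lo hi) := by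
    rw [← hlohi]
    refine continuousOn_primitive_interval' ((hf.mono ?_).intervalIntegrable) ?_
    · rw [hlohi]; exact fun y hy => hclo.trans_le hy.1
    · rw [hlohi]; constructor <;> linarith [min_le_right a b, le_max_right a b]
  have hnhds : Icc lo hi ∈ nhds a :=
    Icc_mem_nhds (by linarith [min_le_left a b]) (by linarith [le_max_left a b])
  rw [show (fun a => ∫ y in a..b, f y) = fun a => -∫ y in b..a, f y from
    funext fun a => integral_symm b a]
  exact (hprim.neg.continuousAt hnhds).continuousWithinAt

theorem integral_rpow_le_of_lt_neg_one {r a b : ℝ} (hr : r < -1) (ha : 0 < a) (hb : 0 < b) :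
    ∫ y in a..b, y ^ r ≤ a ^ (r + 1) / -(r + 1) := by
  have h0 : (0 : ℝ) ∉ uIcc a b := fun h => (lt_min ha hb).not_ge (by simpa using h.1)
  rw [integral_rpow (Or.inr ⟨hr.ne, h0⟩), ← neg_div_neg_eq, neg_sub]
  gcongr
  · linarith
  · exact sub_le_self _ (by positivity)

theorem rpow_mul_div_rpow_add_one {x c : ℝ} (hx : 0 < x) (hc : 0 ≤ c) (r : ℝ) :
    x ^ r * (c / x) ^ (r + 1) = c ^ (r + 1) * x⁻¹ := by
  rw [div_rpow hc hx.le, rpow_add_one hx.ne']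
  have : 0 < x ^ r := by positivity
  field_simp

theorem rpow_mul_integral_rpow_le {r c b x : ℝ} (hr : r < -1) (hc : 0 < c) (hb : 0 < b)
    (hx : 0 < x) : x ^ r * ∫ y in c / x..b, y ^ r ≤ c ^ (r + 1) / -(r + 1) * x⁻¹ :=
  calc _ ≤ x ^ r * ((c / x) ^ (r + 1) / -(r + 1)) := by
        gcongr
        exact integral_rpow_le_of_lt_neg_one hr (by positivity) hb
    _ = _ := by rw [mul_div_assoc', rpow_mul_div_rpow_add_one hx hc.le]; ring

theorem continuousOn_rpow_mul_integral_rpow {r c b : ℝ} (hc : 0 < c) (hb : 0 < b) :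
    ContinuousOn (fun x => x ^ r * ∫ y in c / x..b, y ^ r) (Ioi 0) := by
  have hpow : ContinuousOn (fun y : ℝ => y ^ r) (Ioi 0) :=
    fun y hy => (continuousAt_rpow_const _ _ (Or.inl (ne_of_gt hy))).continuousWithinAt
  have hlower : ContinuousOn (fun x => c / x) (Ioi 0) :=
    continuousOn_const.div continuousOn_id fun x hx => ne_of_gt hx
  exact hpow.mul ((continuousOn_integral_left_of_continuousOn_Ioi hpow hb).comp hlower
    fun x (hx : 0 < x) => div_pos hc hx)

theorem stmt_19_general (τ ε n : ℝ) (hτ2 : 2 < τ) (hε0 : 0 < ε) (hn : 1 ≤ n) :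
    (∫ x in (1 : ℝ)..n, x ^ (1 - τ) * ∫ y in (n / (ε * x))..n, y ^ (1 - τ))
      ≤ ε ^ (τ - 2) * n ^ (2 - τ) * Real.log n / (τ - 2) := by
  have hn0 : 0 < n := by linarith
  have hnε : 0 < n / ε := div_pos hn0 hε0
  have hsub : uIcc 1 n ⊆ Ioi 0 := by
    rw [uIcc_of_le hn]
    exact fun x hx => one_pos.trans_le hx.1
  simp_rw [div_mul_eq_div_div]
  calc _ ≤ ∫ x in (1 : ℝ)..n, (n / ε) ^ (1 - τ + 1) / -(1 - τ + 1) * x⁻¹ :=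
        integral_mono_on hn
          ((continuousOn_rpow_mul_integral_rpow hnε hn0).mono hsub).intervalIntegrable
          ((continuousOn_const.mul
            (continuousOn_inv₀.mono fun x hx => ne_of_gt (hsub hx))).intervalIntegrable)
          fun x hx => rpow_mul_integral_rpow_le (by linarith) hnε hn0 (one_pos.trans_le hx.1)
    _ = (n / ε) ^ (2 - τ) * log n / (τ - 2) := by
        rw [intervalIntegral.integral_const_mul, integral_inv_of_pos one_pos hn0, div_one]
        ring_nf
    _ = _ := by
        rw [div_rpow hn0.le hε0.le, show τ - 2 = -(2 - τ) by ring, rpow_neg hε0.le]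
        ring

/-- Explicit bound from the paper's Lemma 6.1 (minor contributions, Range I):
contribution of pairs with degree product above `n/ε`. -/
theorem stmt_19 (τ ε n : ℝ) (hτ2 : 2 < τ) (hτ3 : τ < 3) (hε0 : 0 < ε)
    (hε1 : ε ≤ 1) (hn : 1 ≤ n) :
    (∫ x in (1 : ℝ)..n, x ^ (1 - τ) * ∫ y in (n / (ε * x))..n, y ^ (1 - τ))
      ≤ ε ^ (τ - 2) * n ^ (2 - τ) * Real.log n / (τ - 2) :=
  stmt_19_general τ ε n hτ2 hε0 hn
end
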